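/- arXiv:2003.13307 — 3 statements merged into one kernel-verified Lean document; each statement's English description precedes it below -/
import Mathlib

section
/- Let C be a finite tensor category. The canonical natural isomorphism κ_{2,3}: A₂ ⇒ A₃, determined by κ_{2,3}∘ι₂(V)_X = ι₃(V)_{∨X}∘(id_{∨X⊗V}⊗ω_X^{-1})∘(associativity), where ω_X: ∨(X∨)→X is the canonical isomorphism, is an isomorphism of Hopf monads. If C is pivotal, then all the canonical natural isomorphisms κ_{i,j}: A_i ⇒ A_j (defined on components by coherence isomorphisms together with ∨(X∨)≅X and the pivotal identification ∨X≅X∨) are isomorphisms of Hopf monads. -/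
open CategoryTheory MonoidalCategory

set_option maxHeartbeats 1000000

noncomputable section CatBase

/-- the left dual (in the paper's conventions this is the *right* dual `X∨`). -/
abbrev ld {C : Type} [Category C] [MonoidalCategory C] [RigidCategory C] (X : C) : C :=
  HasLeftDual.leftDual X
/-- the right dual (in the paper's conventions this is the *left* dual `∨X`). -/
abbrev rd {C : Type} [Category C] [MonoidalCategory C] [RigidCategory C] (X : C) : C :=
  HasRightDual.rightDual X

variable {C : Type} [Category C] [MonoidalCategory C] [RigidCategory C]

/-- the canonical isomorphism `∨V ⊗ ∨W ⟶ ∨(W ⊗ V)` (for the paper's left duals). -/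
def γmap (V W : C) : rd V ⊗ rd W ⟶ rd (W ⊗ V) :=
  (ρ_ (rd V ⊗ rd W)).inv ≫ ((rd V ⊗ rd W) ◁ η_ (W ⊗ V) (rd (W ⊗ V))) ⊗≫
    (rd V ◁ (ε_ W (rd W) ▷ (V ⊗ rd (W ⊗ V)))) ⊗≫ (ε_ V (rd V) ▷ rd (W ⊗ V)) ⊗≫
    𝟙 (rd (W ⊗ V))

/-- the canonical isomorphism `V∨ ⊗ W∨ ⟶ (W ⊗ V)∨` (for the paper's right duals). -/
def γmapL (V W : C) : ld V ⊗ ld W ⟶ ld (W ⊗ V) :=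
  (λ_ (ld V ⊗ ld W)).inv ≫ (η_ (ld (W ⊗ V)) (W ⊗ V) ▷ (ld V ⊗ ld W)) ⊗≫
    (ld (W ⊗ V) ◁ (W ◁ (ε_ (ld V) V ▷ ld W))) ⊗≫ (ld (W ⊗ V) ◁ ε_ (ld W) W) ⊗≫
    𝟙 (ld (W ⊗ V))

variable (C)

/-- the canonical isomorphism `𝟙 ⟶ ∨𝟙`. -/
def uDual : 𝟙_ C ⟶ rd (𝟙_ C) :=
  η_ (𝟙_ C) (rd (𝟙_ C)) ≫ (λ_ (rd (𝟙_ C))).hom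

/-- the canonical isomorphism `𝟙 ⟶ 𝟙∨`. -/
def uDualL : 𝟙_ C ⟶ ld (𝟙_ C) :=
  η_ (ld (𝟙_ C)) (𝟙_ C) ≫ (ρ_ (ld (𝟙_ C))).hom

variable {C}

/-- the canonical isomorphism `X ⟶ (∨X)∨`, inverse of `ω`. -/
def ωinv (X : C) : X ⟶ ld (rd X) :=
  (λ_ X).inv ≫ (η_ (ld (rd X)) (rd X) ▷ X) ⊗≫ (ld (rd X) ◁ ε_ X (rd X)) ⊗≫ 𝟙 (ld (rd X))

/-- a monad structure on an endofunctor. -/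
structure MonadData (C : Type) [Category C] [MonoidalCategory C] where
  A : C ⥤ C
  μ : ∀ V : C, A.obj (A.obj V) ⟶ A.obj V
  η : ∀ V : C, V ⟶ A.obj V
  μ_nat : ∀ {V W : C} (f : V ⟶ W), A.map (A.map f) ≫ μ W = μ V ≫ A.map f
  η_nat : ∀ {V W : C} (f : V ⟶ W), f ≫ η W = η V ≫ A.map f
  μ_assoc : ∀ V : C, A.map (μ V) ≫ μ V = μ (A.obj V) ≫ μ V
  μ_unit_l : ∀ V : C, η (A.obj V) ≫ μ V = 𝟙 _
  μ_unit_r : ∀ V : C, A.map (η V) ≫ μ V = 𝟙 _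

/-- the bimonad axioms for a comonoidal structure `(M2, M0)` on a monad. -/
structure IsBimonad (M : MonadData C)
    (M2 : ∀ X Y : C, M.A.obj (X ⊗ Y) ⟶ M.A.obj X ⊗ M.A.obj Y)
    (M0 : M.A.obj (𝟙_ C) ⟶ 𝟙_ C) : Prop where
  M2_nat : ∀ {X X' Y Y' : C} (f : X ⟶ X') (g : Y ⟶ Y'),
    M.A.map (f ⊗ₘ g) ≫ M2 X' Y' = M2 X Y ≫ (M.A.map f ⊗ₘ M.A.map g)
  M2_assoc : ∀ X Y Z : C,
    M2 (X ⊗ Y) Z ≫ (M2 X Y ▷ M.A.obj Z) ≫ (α_ _ _ _).hom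
      = M.A.map (α_ X Y Z).hom ≫ M2 X (Y ⊗ Z) ≫ (M.A.obj X ◁ M2 Y Z)
  M2_unit_l : ∀ X : C,
    M2 (𝟙_ C) X ≫ (M0 ▷ M.A.obj X) ≫ (λ_ (M.A.obj X)).hom = M.A.map (λ_ X).hom
  M2_unit_r : ∀ X : C,
    M2 X (𝟙_ C) ≫ (M.A.obj X ◁ M0) ≫ (ρ_ (M.A.obj X)).hom = M.A.map (ρ_ X).hom
  μ_comonoidal : ∀ X Y : C,
    M.μ (X ⊗ Y) ≫ M2 X Y
      = M.A.map (M2 X Y) ≫ M2 (M.A.obj X) (M.A.obj Y) ≫ (M.μ X ⊗ₘ M.μ Y)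
  μ_counit : M.μ (𝟙_ C) ≫ M0 = M.A.map M0 ≫ M0
  η_comonoidal : ∀ X Y : C, M.η (X ⊗ Y) ≫ M2 X Y = M.η X ⊗ₘ M.η Y
  η_counit : M.η (𝟙_ C) ≫ M0 = 𝟙 (𝟙_ C)

/-- the Bruguières–Virelizier axioms for a left antipode (the paper's left duals being
`rd`). -/
def IsLeftAntipode (M : MonadData C)
    (M2 : ∀ X Y : C, M.A.obj (X ⊗ Y) ⟶ M.A.obj X ⊗ M.A.obj Y)
    (M0 : M.A.obj (𝟙_ C) ⟶ 𝟙_ C)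
    (sl : ∀ V : C, M.A.obj (rd (M.A.obj V)) ⟶ rd V) : Prop :=
  (∀ V : C,
    M2 (rd (M.A.obj V)) V
        ≫ ((M.A.map (rightAdjointMate (M.μ V)) ≫ sl (M.A.obj V)) ▷ M.A.obj V)
        ≫ ε_ (M.A.obj V) (rd (M.A.obj V))
      = M.A.map (rightAdjointMate (M.η V) ▷ V) ≫ M.A.map (ε_ V (rd V)) ≫ M0)
  ∧ (∀ V : C,
    M.A.map (η_ (M.A.obj V) (rd (M.A.obj V))) ≫ M2 (M.A.obj V) (rd (M.A.obj V))
        ≫ (M.μ V ⊗ₘ sl V)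
      = M0 ≫ η_ V (rd V) ≫ (M.η V ▷ rd V))

/-- the Bruguières–Virelizier axioms for a right antipode (the paper's right duals
being `ld`). -/
def IsRightAntipode (M : MonadData C)
    (M2 : ∀ X Y : C, M.A.obj (X ⊗ Y) ⟶ M.A.obj X ⊗ M.A.obj Y)
    (M0 : M.A.obj (𝟙_ C) ⟶ 𝟙_ C)
    (sr : ∀ V : C, M.A.obj (ld (M.A.obj V)) ⟶ ld V) : Prop :=
  (∀ V : C,
    M2 V (ld (M.A.obj V))
        ≫ (M.A.obj V ◁ (M.A.map (leftAdjointMate (M.μ V)) ≫ sr (M.A.obj V)))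
        ≫ ε_ (ld (M.A.obj V)) (M.A.obj V)
      = M.A.map (V ◁ leftAdjointMate (M.η V)) ≫ M.A.map (ε_ (ld V) V) ≫ M0)
  ∧ (∀ V : C,
    M.A.map (η_ (ld (M.A.obj V)) (M.A.obj V)) ≫ M2 (ld (M.A.obj V)) (M.A.obj V)
        ≫ (sr V ⊗ₘ M.μ V)
      = M0 ≫ η_ (ld V) V ≫ (ld V ◁ M.η V))

/-- `(M, M2, M0)` is a Hopf monad: a bimonad admitting both antipodes. -/
def IsHopfMonad (M : MonadData C)
    (M2 : ∀ X Y : C, M.A.obj (X ⊗ Y) ⟶ M.A.obj X ⊗ M.A.obj Y)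
    (M0 : M.A.obj (𝟙_ C) ⟶ 𝟙_ C) : Prop :=
  IsBimonad M M2 M0
  ∧ (∃ sl : ∀ V : C, M.A.obj (rd (M.A.obj V)) ⟶ rd V, IsLeftAntipode M M2 M0 sl)
  ∧ (∃ sr : ∀ V : C, M.A.obj (ld (M.A.obj V)) ⟶ ld V, IsRightAntipode M M2 M0 sr)

/-- the central monad `A₂(V) = ∫^X ∨X ⊗ (V ⊗ X)` together with its canonical monad
and comonoidal structure, all determined by the universal property of the coend. -/
structure CentralMonadA2 (C : Type) [Category C] [MonoidalCategory C] [RigidCategory C] where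
  M : MonadData C
  ι : ∀ V X : C, rd X ⊗ (V ⊗ X) ⟶ M.A.obj V
  dinat : ∀ (V : C) {X Y : C} (f : X ⟶ Y),
    (rightAdjointMate f ▷ (V ⊗ X)) ≫ ι V X = (rd Y ◁ (V ◁ f)) ≫ ι V Y
  nat : ∀ {V W : C} (g : V ⟶ W) (X : C),
    (rd X ◁ (g ▷ X)) ≫ ι W X = ι V X ≫ M.A.map g
  universal : ∀ (V W : C) (g : ∀ X : C, rd X ⊗ (V ⊗ X) ⟶ W),
    (∀ {X Y : C} (f : X ⟶ Y), (rightAdjointMate f ▷ (V ⊗ X)) ≫ g X = (rd Y ◁ (V ◁ f)) ≫ g Y) →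
    ∃! h : M.A.obj V ⟶ W, ∀ X : C, ι V X ≫ h = g X
  η_det : ∀ V : C, M.η V = (λ_ V).inv ≫ (uDual C ⊗ₘ (ρ_ V).inv) ≫ ι V (𝟙_ C)
  μ_det : ∀ V X Y : C,
    (rd Y ◁ (ι V X ▷ Y)) ≫ ι (M.A.obj V) Y ≫ M.μ V
      = 𝟙 (rd Y ⊗ ((rd X ⊗ (V ⊗ X)) ⊗ Y)) ⊗≫
          (γmap Y X ▷ (V ⊗ (X ⊗ Y))) ≫ ι V (X ⊗ Y)
  M2 : ∀ X Y : C, M.A.obj (X ⊗ Y) ⟶ M.A.obj X ⊗ M.A.obj Y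
  M0 : M.A.obj (𝟙_ C) ⟶ 𝟙_ C
  M2_det : ∀ U V X : C,
    ι (U ⊗ V) X ≫ M2 U V
      = 𝟙 (rd X ⊗ ((U ⊗ V) ⊗ X)) ⊗≫
          ((rd X ⊗ U) ◁ (η_ X (rd X) ▷ (V ⊗ X))) ⊗≫ (ι U X ⊗ₘ ι V X)
  M0_det : ∀ X : C, ι (𝟙_ C) X ≫ M0 = (rd X ◁ (λ_ X).hom) ≫ ε_ X (rd X)

/-- the central monad `A₃(V) = ∫^X (X ⊗ V) ⊗ X∨` with its canonical structure. -/
structure CentralMonadA3 (C : Type) [Category C] [MonoidalCategory C] [RigidCategory C] where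
  M : MonadData C
  ι : ∀ V X : C, (X ⊗ V) ⊗ ld X ⟶ M.A.obj V
  dinat : ∀ (V : C) {X Y : C} (f : X ⟶ Y),
    ((f ▷ V) ▷ ld Y) ≫ ι V Y = ((X ⊗ V) ◁ leftAdjointMate f) ≫ ι V X
  nat : ∀ {V W : C} (g : V ⟶ W) (X : C),
    ((X ◁ g) ▷ ld X) ≫ ι W X = ι V X ≫ M.A.map g
  universal : ∀ (V W : C) (g : ∀ X : C, (X ⊗ V) ⊗ ld X ⟶ W),
    (∀ {X Y : C} (f : X ⟶ Y), ((f ▷ V) ▷ ld Y) ≫ g Y = ((X ⊗ V) ◁ leftAdjointMate f) ≫ g X) →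
    ∃! h : M.A.obj V ⟶ W, ∀ X : C, ι V X ≫ h = g X
  η_det : ∀ V : C, M.η V
    = (λ_ V).inv ≫ (ρ_ (𝟙_ C ⊗ V)).inv ≫ ((𝟙_ C ⊗ V) ◁ uDualL C) ≫ ι V (𝟙_ C)
  μ_det : ∀ V X Y : C,
    ((Y ◁ ι V X) ▷ ld Y) ≫ ι (M.A.obj V) Y ≫ M.μ V
      = 𝟙 ((Y ⊗ ((X ⊗ V) ⊗ ld X)) ⊗ ld Y) ⊗≫
          (((Y ⊗ X) ⊗ V) ◁ γmapL X Y) ≫ ι V (Y ⊗ X)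
  M2 : ∀ X Y : C, M.A.obj (X ⊗ Y) ⟶ M.A.obj X ⊗ M.A.obj Y
  M0 : M.A.obj (𝟙_ C) ⟶ 𝟙_ C
  M2_det : ∀ U V X : C,
    ι (U ⊗ V) X ≫ M2 U V
      = 𝟙 ((X ⊗ (U ⊗ V)) ⊗ ld X) ⊗≫
          ((X ⊗ U) ◁ (η_ (ld X) X ▷ (V ⊗ ld X))) ⊗≫ (ι U X ⊗ₘ ι V X)
  M0_det : ∀ X : C, ι (𝟙_ C) X ≫ M0 = ((ρ_ X).hom ▷ ld X) ≫ ε_ (ld X) X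

/-- a pivotal structure, encoded as a monoidal natural isomorphism between the right
and the left dual functors. -/
structure PivotalData (C : Type) [Category C] [MonoidalCategory C] [RigidCategory C] where
  p : ∀ X : C, ld X ≅ rd X
  nat : ∀ {X Y : C} (f : X ⟶ Y), leftAdjointMate f ≫ (p X).hom = (p Y).hom ≫ rightAdjointMate f
  monoidal : ∀ X Y : C,
    ((p X).hom ⊗ₘ (p Y).hom) ≫ γmap X Y = γmapL X Y ≫ (p (Y ⊗ X)).hom
  unit : uDualL C ≫ (p (𝟙_ C)).hom = uDual C

/-- the central monad `A₁(V) = ∫^X X∨ ⊗ (V ⊗ X)` with its canonical structure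
(`C` pivotal). -/
structure CentralMonadA1 (C : Type) [Category C] [MonoidalCategory C] [RigidCategory C]
    (P : PivotalData C) where
  M : MonadData C
  ι : ∀ V X : C, ld X ⊗ (V ⊗ X) ⟶ M.A.obj V
  dinat : ∀ (V : C) {X Y : C} (f : X ⟶ Y),
    (leftAdjointMate f ▷ (V ⊗ X)) ≫ ι V X = (ld Y ◁ (V ◁ f)) ≫ ι V Y
  nat : ∀ {V W : C} (g : V ⟶ W) (X : C),
    (ld X ◁ (g ▷ X)) ≫ ι W X = ι V X ≫ M.A.map g
  universal : ∀ (V W : C) (g : ∀ X : C, ld X ⊗ (V ⊗ X) ⟶ W),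
    (∀ {X Y : C} (f : X ⟶ Y), (leftAdjointMate f ▷ (V ⊗ X)) ≫ g X = (ld Y ◁ (V ◁ f)) ≫ g Y) →
    ∃! h : M.A.obj V ⟶ W, ∀ X : C, ι V X ≫ h = g X
  η_det : ∀ V : C, M.η V = (λ_ V).inv ≫ (uDualL C ⊗ₘ (ρ_ V).inv) ≫ ι V (𝟙_ C)
  μ_det : ∀ V X Y : C,
    (ld Y ◁ (ι V X ▷ Y)) ≫ ι (M.A.obj V) Y ≫ M.μ V
      = 𝟙 (ld Y ⊗ ((ld X ⊗ (V ⊗ X)) ⊗ Y)) ⊗≫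
          (γmapL Y X ▷ (V ⊗ (X ⊗ Y))) ≫ ι V (X ⊗ Y)
  M2 : ∀ X Y : C, M.A.obj (X ⊗ Y) ⟶ M.A.obj X ⊗ M.A.obj Y
  M0 : M.A.obj (𝟙_ C) ⟶ 𝟙_ C
  M2_det : ∀ U V X : C,
    ι (U ⊗ V) X ≫ M2 U V
      = 𝟙 (ld X ⊗ ((U ⊗ V) ⊗ X)) ⊗≫
          ((ld X ⊗ U) ◁ ((η_ X (rd X) ≫ (X ◁ (P.p X).inv)) ▷ (V ⊗ X))) ⊗≫
          (ι U X ⊗ₘ ι V X)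
  M0_det : ∀ X : C,
    ι (𝟙_ C) X ≫ M0 = (ld X ◁ (λ_ X).hom) ≫ ((P.p X).hom ▷ X) ≫ ε_ X (rd X)

/-- the central monad `A₄(V) = ∫^X (X ⊗ V) ⊗ ∨X` with its canonical structure
(`C` pivotal). -/
structure CentralMonadA4 (C : Type) [Category C] [MonoidalCategory C] [RigidCategory C]
    (P : PivotalData C) where
  M : MonadData C
  ι : ∀ V X : C, (X ⊗ V) ⊗ rd X ⟶ M.A.obj V
  dinat : ∀ (V : C) {X Y : C} (f : X ⟶ Y),
    ((f ▷ V) ▷ rd Y) ≫ ι V Y = ((X ⊗ V) ◁ rightAdjointMate f) ≫ ι V X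
  nat : ∀ {V W : C} (g : V ⟶ W) (X : C),
    ((X ◁ g) ▷ rd X) ≫ ι W X = ι V X ≫ M.A.map g
  universal : ∀ (V W : C) (g : ∀ X : C, (X ⊗ V) ⊗ rd X ⟶ W),
    (∀ {X Y : C} (f : X ⟶ Y), ((f ▷ V) ▷ rd Y) ≫ g Y = ((X ⊗ V) ◁ rightAdjointMate f) ≫ g X) →
    ∃! h : M.A.obj V ⟶ W, ∀ X : C, ι V X ≫ h = g X
  η_det : ∀ V : C, M.η V
    = (λ_ V).inv ≫ (ρ_ (𝟙_ C ⊗ V)).inv ≫ ((𝟙_ C ⊗ V) ◁ uDual C) ≫ ι V (𝟙_ C)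
  μ_det : ∀ V X Y : C,
    ((Y ◁ ι V X) ▷ rd Y) ≫ ι (M.A.obj V) Y ≫ M.μ V
      = 𝟙 ((Y ⊗ ((X ⊗ V) ⊗ rd X)) ⊗ rd Y) ⊗≫
          (((Y ⊗ X) ⊗ V) ◁ γmap X Y) ≫ ι V (Y ⊗ X)
  M2 : ∀ X Y : C, M.A.obj (X ⊗ Y) ⟶ M.A.obj X ⊗ M.A.obj Y
  M0 : M.A.obj (𝟙_ C) ⟶ 𝟙_ C
  M2_det : ∀ U V X : C,
    ι (U ⊗ V) X ≫ M2 U V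
      = 𝟙 ((X ⊗ (U ⊗ V)) ⊗ rd X) ⊗≫
          ((X ⊗ U) ◁ ((η_ (ld X) X ≫ ((P.p X).hom ▷ X)) ▷ (V ⊗ rd X))) ⊗≫
          (ι U X ⊗ₘ ι V X)
  M0_det : ∀ X : C,
    ι (𝟙_ C) X ≫ M0 = ((ρ_ X).hom ▷ rd X) ≫ (X ◁ (P.p X).inv) ≫ ε_ (ld X) X

end CatBase

/-!
STATEMENT 1.
Let `C` be a finite tensor category.  The canonical natural isomorphism
`κ_{2,3} : A₂ ⇒ A₃`, determined by
`κ_{2,3} ∘ ι₂(V)_X = ι₃(V)_{∨X} ∘ (id_{∨X⊗V} ⊗ ω_X⁻¹) ∘ (associativity)`,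
is an isomorphism of Hopf monads.  If `C` is pivotal, then all the canonical natural
isomorphisms `κ_{i,j} : A_i ⇒ A_j` (defined on components by coherence isomorphisms
together with `∨(X∨) ≅ X` and the pivotal identification `∨X ≅ X∨`) are isomorphisms
of Hopf monads; here we state this for the generating isomorphisms `κ_{1,2}`,
`κ_{2,3}` and `κ_{3,4}`.
-/

open CategoryTheory MonoidalCategory

variable {C : Type} [Category C] [MonoidalCategory C] [RigidCategory C]

/-- `κ` is an isomorphism of Hopf monads from `(M, M2, M0)` to `(M', M2', M0')`:
a comonoidal natural isomorphism which is a morphism of monads. -/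
def IsHopfMonadIso (M M' : MonadData C)
    (M2 : ∀ X Y : C, M.A.obj (X ⊗ Y) ⟶ M.A.obj X ⊗ M.A.obj Y)
    (M0 : M.A.obj (𝟙_ C) ⟶ 𝟙_ C)
    (M2' : ∀ X Y : C, M'.A.obj (X ⊗ Y) ⟶ M'.A.obj X ⊗ M'.A.obj Y)
    (M0' : M'.A.obj (𝟙_ C) ⟶ 𝟙_ C)
    (κ : ∀ V : C, M.A.obj V ⟶ M'.A.obj V) : Prop :=
  -- each component is an isomorphism
  (∀ V : C, IsIso (κ V))
  -- naturality
  ∧ (∀ {V W : C} (f : V ⟶ W), M.A.map f ≫ κ W = κ V ≫ M'.A.map f)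
  -- morphism of monads
  ∧ (∀ V : C, M.μ V ≫ κ V = M.A.map (κ V) ≫ κ (M'.A.obj V) ≫ M'.μ V)
  ∧ (∀ V : C, M.η V ≫ κ V = M'.η V)
  -- comonoidal
  ∧ (∀ X Y : C, κ (X ⊗ Y) ≫ M2' X Y = M2 X Y ≫ (κ X ⊗ₘ κ Y))
  ∧ (κ (𝟙_ C) ≫ M0' = M0)

/-!
Each `κ` only reindexes one universal dinatural family by another: along the pivotal
identification `ld X ≅ rd X` for `κ₁₂` and `κ₃₄`, and along `X ↦ rd X` followed by the
isomorphism `ωinv X : X ≅ ld (rd X)` for `κ₂₃`. The inverse of `κ` comes from the inverse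
reindexing (by `p⁻¹`, respectively by `ψinv X : X ≅ rd (ld X)`). The unit, multiplication,
comultiplication and counit of every `Aᵢ` are determined by their composites with the
universal families, which are jointly epimorphic (also after whiskering, since tensoring
with an object of a rigid category is a left adjoint). So each Hopf monad axiom for `κ` can be
checked after precomposition with these families, where it becomes an identity between
(co)evaluations: the pivotal structure is monoidal and unital, and `ωinv` is compatible
with evaluation, coevaluation, the unit and the duals of tensor products.
-/

section JointlyEpi

variable {C : Type} [Category C]

def JointlyEpi {A : C} {S : C → C} (f : ∀ X : C, S X ⟶ A) : Prop :=
  ∀ ⦃W : C⦄ (h₁ h₂ : A ⟶ W), (∀ X, f X ≫ h₁ = f X ≫ h₂) → h₁ = h₂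

theorem JointlyEpi.of_existsUnique {A : C} {S : C → C} {f : ∀ X : C, S X ⟶ A}
    (hf : ∀ ⦃W : C⦄ (h : A ⟶ W), ∃! u : A ⟶ W, ∀ X, f X ≫ u = f X ≫ h) : JointlyEpi f :=
  fun _ h₁ _ h => (hf h₁).unique (fun _ => rfl) fun X => (h X).symm

theorem JointlyEpi.whiskerLeft {A : C} {S : C → C} {f : ∀ X : C, S X ⟶ A} (hf : JointlyEpi f)
    [MonoidalCategory C] (U : C) [HasLeftDual U] : JointlyEpi fun X => U ◁ f X := by
  intro W h₁ h₂ h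
  refine ((tensorLeftAdjunction (ᘁU) U).homEquiv A W).injective (hf _ _ fun X => ?_)
  rw [← Adjunction.homEquiv_naturality_left, ← Adjunction.homEquiv_naturality_left]
  exact congrArg _ (h X)

theorem JointlyEpi.whiskerRight {A : C} {S : C → C} {f : ∀ X : C, S X ⟶ A} (hf : JointlyEpi f)
    [MonoidalCategory C] (U : C) [HasRightDual U] : JointlyEpi fun X => f X ▷ U := by
  intro W h₁ h₂ h
  refine ((tensorRightAdjunction U (Uᘁ)).homEquiv A W).injective (hf _ _ fun X => ?_)
  rw [← Adjunction.homEquiv_naturality_left, ← Adjunction.homEquiv_naturality_left]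
  exact congrArg _ (h X)

end JointlyEpi

section Duality

variable {C : Type} [Category C] [MonoidalCategory C] [RigidCategory C]

theorem leftDual_hom_ext {Z W : C} {u v : W ⟶ ld Z}
    (h : (Z ◁ u) ≫ ε_ (ld Z) Z = (Z ◁ v) ≫ ε_ (ld Z) Z) : u = v := by
  simpa using congrArg (tensorLeftHomEquiv W (ld Z) Z (𝟙_ C)) h

theorem rightDual_hom_ext {Z W : C} {u v : W ⟶ rd Z}
    (h : (u ▷ Z) ≫ ε_ Z (rd Z) = (v ▷ Z) ≫ ε_ Z (rd Z)) : u = v := by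
  simpa using congrArg (tensorRightHomEquiv W Z (rd Z) (𝟙_ C)) h

theorem tensor_rightDual_hom_ext {V W X : C} {u v : W ⟶ V ⊗ rd X}
    (h : u ▷ X ≫ (α_ _ _ _).hom ≫ (V ◁ ε_ X (rd X)) = v ▷ X ≫ (α_ _ _ _).hom ≫ (V ◁ ε_ X (rd X))) :
    u = v :=
  (tensorRightHomEquiv W X (rd X) V).symm.injective (by simp [tensorRightHomEquiv, reassoc_of% h])

-- Applied to a morphism between duals, `rightAdjointMate` and `leftAdjointMate` would pick up
-- the instances `hasRightDualLeftDual` and `hasLeftDualRightDual` instead of the rigid structure.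
abbrev rdMap {X Y : C} (f : X ⟶ Y) : rd Y ⟶ rd X := rightAdjointMate f

abbrev ldMap {X Y : C} (f : X ⟶ Y) : ld Y ⟶ ld X := leftAdjointMate f

theorem rdMap_whiskerRight_comp_evaluation {X Y : C} (f : X ⟶ Y) :
    (rdMap f ▷ X) ≫ ε_ X (rd X) = (rd Y ◁ f) ≫ ε_ Y (rd Y) :=
  rightAdjointMate_comp_evaluation f

theorem whiskerLeft_ldMap_comp_evaluation {X Y : C} (f : X ⟶ Y) :
    (X ◁ ldMap f) ≫ ε_ (ld X) X = (f ▷ ld Y) ≫ ε_ (ld Y) Y :=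
  leftAdjointMate_comp_evaluation f

def ψinv (X : C) : X ⟶ rd (ld X) :=
  (ρ_ X).inv ≫ (X ◁ η_ (ld X) (rd (ld X))) ⊗≫ (ε_ (ld X) X ▷ rd (ld X)) ⊗≫ 𝟙 _

theorem whiskerLeft_ωinv_comp_evaluation (X : C) :
    (rd X ◁ ωinv X) ≫ ε_ (ld (rd X)) (rd X) = ε_ X (rd X) :=
  calc (rd X ◁ ωinv X) ≫ ε_ (ld (rd X)) (rd X)
      = 𝟙 _ ⊗≫ rd X ◁ η_ (ld (rd X)) (rd X) ▷ X ⊗≫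
          ((rd X ⊗ ld (rd X)) ◁ ε_ X (rd X) ≫ ε_ (ld (rd X)) (rd X) ▷ 𝟙_ C) ⊗≫ 𝟙 _ := by
        dsimp [ωinv]; monoidal
    _ = 𝟙 _ ⊗≫ (rd X ◁ η_ (ld (rd X)) (rd X) ⊗≫ ε_ (ld (rd X)) (rd X) ▷ rd X) ▷ X ⊗≫
          ε_ X (rd X) := by
        rw [whisker_exchange]; monoidal
    _ = ε_ X (rd X) := by
        rw [ExactPairing.coevaluation_evaluation'']; monoidal

theorem ψinv_whiskerRight_comp_evaluation (X : C) :
    (ψinv X ▷ ld X) ≫ ε_ (ld X) (rd (ld X)) = ε_ (ld X) X :=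
  calc (ψinv X ▷ ld X) ≫ ε_ (ld X) (rd (ld X))
      = 𝟙 _ ⊗≫ X ◁ η_ (ld X) (rd (ld X)) ▷ ld X ⊗≫
          (ε_ (ld X) X ▷ (rd (ld X) ⊗ ld X) ≫ 𝟙_ C ◁ ε_ (ld X) (rd (ld X))) ⊗≫ 𝟙 _ := by
        dsimp [ψinv]; monoidal
    _ = 𝟙 _ ⊗≫ X ◁ (η_ (ld X) (rd (ld X)) ▷ ld X ⊗≫ ld X ◁ ε_ (ld X) (rd (ld X))) ⊗≫
          ε_ (ld X) X := by
        rw [← whisker_exchange]; monoidal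
    _ = ε_ (ld X) X := by
        rw [ExactPairing.evaluation_coevaluation'']; monoidal

theorem coevaluation_comp_ωinv_whiskerRight (X : C) :
    η_ X (rd X) ≫ (ωinv X ▷ rd X) = η_ (ld (rd X)) (rd X) := by
  apply tensor_rightDual_hom_ext
  calc (η_ X (rd X) ≫ ωinv X ▷ rd X) ▷ X ≫ (α_ _ _ _).hom ≫ (ld (rd X) ◁ ε_ X (rd X))
      = 𝟙 _ ⊗≫ η_ X (rd X) ▷ X ⊗≫
          (ωinv X ▷ (rd X ⊗ X) ≫ ld (rd X) ◁ ε_ X (rd X)) ⊗≫ 𝟙 _ := by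
        monoidal
    _ = 𝟙 _ ⊗≫ (η_ X (rd X) ▷ X ⊗≫ X ◁ ε_ X (rd X)) ⊗≫ ωinv X ▷ 𝟙_ C ⊗≫ 𝟙 _ := by
        rw [← whisker_exchange]; monoidal
    _ = η_ (ld (rd X)) (rd X) ▷ X ≫ (α_ _ _ _).hom ≫ (ld (rd X) ◁ ε_ X (rd X)) := by
        rw [ExactPairing.evaluation_coevaluation'']; dsimp [ωinv]; monoidal

theorem ψinv_naturality {X Y : C} (f : X ⟶ Y) :
    f ≫ ψinv Y = ψinv X ≫ rdMap (ldMap f) := by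
  apply rightDual_hom_ext (Z := ld Y)
  rw [comp_whiskerRight_assoc, comp_whiskerRight_assoc,
    rdMap_whiskerRight_comp_evaluation (ldMap f), ← whisker_exchange_assoc,
    ψinv_whiskerRight_comp_evaluation, ψinv_whiskerRight_comp_evaluation,
    whiskerLeft_ldMap_comp_evaluation]

theorem ψinv_comp_rdMap_ωinv (X : C) :
    ψinv (rd X) ≫ rdMap (ωinv X) = 𝟙 (rd X) := by
  apply rightDual_hom_ext (Z := X)
  rw [comp_whiskerRight_assoc, rdMap_whiskerRight_comp_evaluation, ← whisker_exchange_assoc,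
    ψinv_whiskerRight_comp_evaluation, whiskerLeft_ωinv_comp_evaluation, id_whiskerRight,
    Category.id_comp]

theorem ωinv_comp_ldMap_ψinv (X : C) :
    ωinv (ld X) ≫ ldMap (ψinv X) = 𝟙 (ld X) := by
  apply leftDual_hom_ext (Z := X)
  rw [whiskerLeft_comp_assoc, whiskerLeft_ldMap_comp_evaluation, whisker_exchange_assoc,
    whiskerLeft_ωinv_comp_evaluation, ψinv_whiskerRight_comp_evaluation,
    MonoidalCategory.whiskerLeft_id, Category.id_comp]

theorem ωinv_comp_ldMap_uDual :
    ωinv (𝟙_ C) ≫ ldMap (uDual C) = uDualL C := by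
  have huDual : (uDual C ▷ 𝟙_ C) ≫ ε_ (𝟙_ C) (rd (𝟙_ C)) = (λ_ (𝟙_ C)).hom := by
    calc (uDual C ▷ 𝟙_ C) ≫ ε_ (𝟙_ C) (rd (𝟙_ C))
        = η_ (𝟙_ C) (rd (𝟙_ C)) ▷ 𝟙_ C ≫ (α_ _ _ _).hom ≫
            (𝟙_ C ◁ ε_ (𝟙_ C) (rd (𝟙_ C))) ≫ (λ_ (𝟙_ C)).hom := by
          dsimp [uDual]; monoidal
      _ = (λ_ (𝟙_ C)).hom := by
          rw [ExactPairing.evaluation_coevaluation_assoc]; monoidal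
  have huDualL : (𝟙_ C ◁ uDualL C) ≫ ε_ (ld (𝟙_ C)) (𝟙_ C) = (λ_ (𝟙_ C)).hom := by
    calc (𝟙_ C ◁ uDualL C) ≫ ε_ (ld (𝟙_ C)) (𝟙_ C)
        = 𝟙_ C ◁ η_ (ld (𝟙_ C)) (𝟙_ C) ≫ (α_ _ _ _).inv ≫
            (ε_ (ld (𝟙_ C)) (𝟙_ C) ▷ 𝟙_ C) ≫ (ρ_ (𝟙_ C)).hom := by
          dsimp [uDualL]; monoidal
      _ = (λ_ (𝟙_ C)).hom := by
          rw [ExactPairing.coevaluation_evaluation_assoc]; monoidal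
  apply leftDual_hom_ext (Z := 𝟙_ C)
  rw [whiskerLeft_comp_assoc, whiskerLeft_ldMap_comp_evaluation, whisker_exchange_assoc,
    whiskerLeft_ωinv_comp_evaluation, huDual, huDualL]

theorem γmap_whiskerRight_comp_evaluation (X Y : C) :
    (γmap Y X ▷ (X ⊗ Y)) ≫ ε_ (X ⊗ Y) (rd (X ⊗ Y))
      = 𝟙 _ ⊗≫ (rd Y ◁ (ε_ X (rd X) ▷ Y)) ⊗≫ ε_ Y (rd Y) := by
  set εXY : (rd Y ⊗ rd X) ⊗ (X ⊗ Y) ⟶ 𝟙_ C := 𝟙 _ ⊗≫ (rd Y ◁ (ε_ X (rd X) ▷ Y)) ⊗≫ ε_ Y (rd Y)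
  calc (γmap Y X ▷ (X ⊗ Y)) ≫ ε_ (X ⊗ Y) (rd (X ⊗ Y))
      = 𝟙 _ ⊗≫ ((rd Y ⊗ rd X) ◁ (η_ (X ⊗ Y) (rd (X ⊗ Y)) ▷ (X ⊗ Y))) ⊗≫
          ((εXY ▷ (rd (X ⊗ Y) ⊗ (X ⊗ Y))) ≫ (𝟙_ C ◁ ε_ (X ⊗ Y) (rd (X ⊗ Y)))) ⊗≫ 𝟙 _ := by
        dsimp [γmap, εXY]; monoidal
    _ = 𝟙 _ ⊗≫ ((rd Y ⊗ rd X) ◁ (η_ (X ⊗ Y) (rd (X ⊗ Y)) ▷ (X ⊗ Y) ≫ (α_ _ _ _).hom ≫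
          ((X ⊗ Y) ◁ ε_ (X ⊗ Y) (rd (X ⊗ Y))))) ⊗≫ (εXY ▷ 𝟙_ C) ⊗≫ 𝟙 _ := by
        rw [← whisker_exchange]; monoidal
    _ = εXY := by
        rw [ExactPairing.evaluation_coevaluation]; monoidal

theorem whiskerLeft_γmapL_comp_evaluation (X Y : C) :
    ((Y ⊗ X) ◁ γmapL X Y) ≫ ε_ (ld (Y ⊗ X)) (Y ⊗ X)
      = 𝟙 _ ⊗≫ (Y ◁ (ε_ (ld X) X ▷ ld Y)) ⊗≫ ε_ (ld Y) Y := by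
  set εXY : (Y ⊗ X) ⊗ (ld X ⊗ ld Y) ⟶ 𝟙_ C := 𝟙 _ ⊗≫ (Y ◁ (ε_ (ld X) X ▷ ld Y)) ⊗≫ ε_ (ld Y) Y
  calc ((Y ⊗ X) ◁ γmapL X Y) ≫ ε_ (ld (Y ⊗ X)) (Y ⊗ X)
      = 𝟙 _ ⊗≫ ((Y ⊗ X) ◁ (η_ (ld (Y ⊗ X)) (Y ⊗ X) ▷ (ld X ⊗ ld Y))) ⊗≫
          ((((Y ⊗ X) ⊗ ld (Y ⊗ X)) ◁ εXY) ≫ (ε_ (ld (Y ⊗ X)) (Y ⊗ X) ▷ 𝟙_ C)) ⊗≫ 𝟙 _ := by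
        dsimp [γmapL, εXY]; monoidal
    _ = 𝟙 _ ⊗≫ (((Y ⊗ X) ◁ η_ (ld (Y ⊗ X)) (Y ⊗ X) ≫ (α_ _ _ _).inv ≫
          (ε_ (ld (Y ⊗ X)) (Y ⊗ X) ▷ (Y ⊗ X))) ▷ (ld X ⊗ ld Y)) ⊗≫ (𝟙_ C ◁ εXY) ⊗≫ 𝟙 _ := by
        rw [whisker_exchange]; monoidal
    _ = εXY := by
        rw [ExactPairing.coevaluation_evaluation]; monoidal

theorem ωinv_comp_ldMap_γmap (X Y : C) :
    ωinv (X ⊗ Y) ≫ ldMap (γmap Y X) = (ωinv X ⊗ₘ ωinv Y) ≫ γmapL (rd X) (rd Y) := by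
  apply leftDual_hom_ext (Z := rd Y ⊗ rd X)
  rw [whiskerLeft_comp_assoc, whiskerLeft_ldMap_comp_evaluation, whisker_exchange_assoc,
    whiskerLeft_ωinv_comp_evaluation, γmap_whiskerRight_comp_evaluation, whiskerLeft_comp_assoc,
    whiskerLeft_γmapL_comp_evaluation]
  calc 𝟙 _ ⊗≫ (rd Y ◁ (ε_ X (rd X) ▷ Y)) ⊗≫ ε_ Y (rd Y)
      = 𝟙 _ ⊗≫ ((rd Y ◁ ((rd X ◁ ωinv X) ≫ ε_ (ld (rd X)) (rd X))) ▷ Y ≫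
          (rd Y ⊗ 𝟙_ C) ◁ ωinv Y) ⊗≫ ε_ (ld (rd Y)) (rd Y) := by
        rw [whiskerLeft_ωinv_comp_evaluation, ← whiskerLeft_ωinv_comp_evaluation Y]; monoidal
    _ = 𝟙 _ ⊗≫ ((rd Y ⊗ (rd X ⊗ X)) ◁ ωinv Y ≫
          (rd Y ◁ ((rd X ◁ ωinv X) ≫ ε_ (ld (rd X)) (rd X))) ▷ ld (rd Y)) ⊗≫
          ε_ (ld (rd Y)) (rd Y) := by
        rw [← whisker_exchange]
    _ = _ := by
        rw [tensorHom_def']; monoidal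

end Duality

section CentralMonads

variable {C : Type} [Category C] [MonoidalCategory C] [RigidCategory C]

theorem CentralMonadA1.jointlyEpi {P : PivotalData C} (A : CentralMonadA1 C P) (V : C) :
    JointlyEpi (A.ι V) :=
  .of_existsUnique fun _ h => A.universal _ _ _ fun f => by
    rw [← Category.assoc, A.dinat, Category.assoc]

theorem CentralMonadA2.jointlyEpi (A : CentralMonadA2 C) (V : C) : JointlyEpi (A.ι V) :=
  .of_existsUnique fun _ h => A.universal _ _ _ fun f => by
    rw [← Category.assoc, A.dinat, Category.assoc]

theorem CentralMonadA3.jointlyEpi (A : CentralMonadA3 C) (V : C) : JointlyEpi (A.ι V) :=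
  .of_existsUnique fun _ h => A.universal _ _ _ fun f => by
    rw [← Category.assoc, A.dinat, Category.assoc]

theorem CentralMonadA4.jointlyEpi {P : PivotalData C} (A : CentralMonadA4 C P) (V : C) :
    JointlyEpi (A.ι V) :=
  .of_existsUnique fun _ h => A.universal _ _ _ fun f => by
    rw [← Category.assoc, A.dinat, Category.assoc]

theorem CentralMonadA1.hom_ext₂ {P : PivotalData C} (A : CentralMonadA1 C P) {V W : C}
    {h₁ h₂ : A.M.A.obj (A.M.A.obj V) ⟶ W}
    (h : ∀ X Y : C, (ld Y ◁ (A.ι V X ▷ Y)) ≫ A.ι (A.M.A.obj V) Y ≫ h₁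
      = (ld Y ◁ (A.ι V X ▷ Y)) ≫ A.ι (A.M.A.obj V) Y ≫ h₂) : h₁ = h₂ :=
  A.jointlyEpi _ _ _ fun Y =>
    ((A.jointlyEpi V).whiskerRight Y).whiskerLeft (ld Y) _ _ fun X => by simpa using h X Y

theorem CentralMonadA2.hom_ext₂ (A : CentralMonadA2 C) {V W : C}
    {h₁ h₂ : A.M.A.obj (A.M.A.obj V) ⟶ W}
    (h : ∀ X Y : C, (rd Y ◁ (A.ι V X ▷ Y)) ≫ A.ι (A.M.A.obj V) Y ≫ h₁
      = (rd Y ◁ (A.ι V X ▷ Y)) ≫ A.ι (A.M.A.obj V) Y ≫ h₂) : h₁ = h₂ :=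
  A.jointlyEpi _ _ _ fun Y =>
    ((A.jointlyEpi V).whiskerRight Y).whiskerLeft (rd Y) _ _ fun X => by simpa using h X Y

theorem CentralMonadA3.hom_ext₂ (A : CentralMonadA3 C) {V W : C}
    {h₁ h₂ : A.M.A.obj (A.M.A.obj V) ⟶ W}
    (h : ∀ X Y : C, ((Y ◁ A.ι V X) ▷ ld Y) ≫ A.ι (A.M.A.obj V) Y ≫ h₁
      = ((Y ◁ A.ι V X) ▷ ld Y) ≫ A.ι (A.M.A.obj V) Y ≫ h₂) : h₁ = h₂ :=
  A.jointlyEpi _ _ _ fun Y =>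
    ((A.jointlyEpi V).whiskerLeft Y).whiskerRight (ld Y) _ _ fun X => by simpa using h X Y

theorem CentralMonadA2.ψinv_ι_dinatural (A : CentralMonadA2 C) (V : C) {X Y : C} (f : X ⟶ Y) :
    ((f ▷ V) ▷ ld Y) ≫ ((ψinv Y ▷ V) ▷ ld Y) ≫ (α_ _ _ _).hom ≫ A.ι V (ld Y)
      = ((X ⊗ V) ◁ leftAdjointMate f) ≫
          ((ψinv X ▷ V) ▷ ld X) ≫ (α_ _ _ _).hom ≫ A.ι V (ld X) :=
  calc ((f ▷ V) ▷ ld Y) ≫ ((ψinv Y ▷ V) ▷ ld Y) ≫ (α_ _ _ _).hom ≫ A.ι V (ld Y)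
      = ((ψinv X ▷ V) ▷ ld Y) ≫ (α_ _ _ _).hom ≫
          (rdMap (ldMap f) ▷ (V ⊗ ld Y)) ≫ A.ι V (ld Y) := by
        rw [← comp_whiskerRight_assoc, ← comp_whiskerRight, ψinv_naturality]; monoidal
    _ = ((ψinv X ▷ V) ▷ ld Y) ≫ (α_ _ _ _).hom ≫ (rd (ld X) ◁ (V ◁ ldMap f)) ≫ A.ι V (ld X) := by
        rw [A.dinat]
    _ = _ := by
        rw [whisker_exchange_assoc]; monoidal

theorem PivotalData.inv_naturality (P : PivotalData C) {X Y : C} (f : X ⟶ Y) :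
    (P.p Y).inv ≫ leftAdjointMate f = rightAdjointMate f ≫ (P.p X).inv := by
  rw [Iso.inv_comp_eq, ← reassoc_of% (P.nat f), Iso.hom_inv_id, Category.comp_id]

end CentralMonads

namespace κ₁₂

variable {C : Type} [Category C] [MonoidalCategory C] [RigidCategory C]
  {P : PivotalData C} (A1 : CentralMonadA1 C P) (A2 : CentralMonadA2 C)
  {κ : ∀ V : C, A1.M.A.obj V ⟶ A2.M.A.obj V}
  (hκ : ∀ V X : C, A1.ι V X ≫ κ V = ((P.p X).hom ▷ (V ⊗ X)) ≫ A2.ι V X)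

include hκ

theorem naturality {V W : C} (f : V ⟶ W) : A1.M.A.map f ≫ κ W = κ V ≫ A2.M.A.map f := by
  refine A1.jointlyEpi V _ _ fun X => ?_
  rw [← reassoc_of% (A1.nat f X), hκ, reassoc_of% (hκ V X), ← A2.nat f X,
    whisker_exchange_assoc]

theorem η_comp (V : C) : A1.M.η V ≫ κ V = A2.M.η V := by
  rw [A1.η_det, A2.η_det, Category.assoc, Category.assoc, hκ, ← P.unit,
    MonoidalCategory.tensorHom_def, MonoidalCategory.tensorHom_def, comp_whiskerRight]
  simp only [Category.assoc, whisker_exchange_assoc]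

theorem comp_M0 : κ (𝟙_ C) ≫ A2.M0 = A1.M0 := by
  refine A1.jointlyEpi _ _ _ fun X => ?_
  rw [reassoc_of% hκ, A2.M0_det, A1.M0_det, whisker_exchange_assoc]

theorem μ_comp (V : C) : A1.M.μ V ≫ κ V = A1.M.A.map (κ V) ≫ κ (A2.M.A.obj V) ≫ A2.M.μ V := by
  refine A1.hom_ext₂ fun X Y => ?_
  calc (ld Y ◁ (A1.ι V X ▷ Y)) ≫ A1.ι (A1.M.A.obj V) Y ≫ A1.M.μ V ≫ κ V
      = 𝟙 _ ⊗≫ ((γmapL Y X ≫ (P.p (X ⊗ Y)).hom) ▷ (V ⊗ (X ⊗ Y))) ≫ A2.ι V (X ⊗ Y) := by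
        rw [reassoc_of% A1.μ_det]
        simp only [monoidalComp, Category.assoc, hκ, comp_whiskerRight]
    _ = 𝟙 _ ⊗≫ ((((P.p Y).hom ⊗ₘ (P.p X).hom) ≫ γmap Y X) ▷ (V ⊗ (X ⊗ Y))) ≫ A2.ι V (X ⊗ Y) := by
        rw [P.monoidal]
    _ = _ := by
        rw [← reassoc_of% (A1.nat (κ V) Y), reassoc_of% (hκ (A2.M.A.obj V) Y),
          whisker_exchange_assoc, whisker_exchange_assoc, ← whiskerLeft_comp_assoc,
          ← comp_whiskerRight, hκ V X]
        simp only [comp_whiskerRight, whiskerLeft_comp, Category.assoc]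
        rw [A2.μ_det, MonoidalCategory.tensorHom_def]
        monoidal

theorem comp_M2 (U V : C) : κ (U ⊗ V) ≫ A2.M2 U V = A1.M2 U V ≫ (κ U ⊗ₘ κ V) := by
  refine A1.jointlyEpi _ _ _ fun X => ?_
  calc A1.ι (U ⊗ V) X ≫ κ (U ⊗ V) ≫ A2.M2 U V
      = 𝟙 _ ⊗≫ ((P.p X).hom ▷ (U ⊗ (𝟙_ C ⊗ (V ⊗ X))) ≫
          rd X ◁ U ◁ (η_ X (rd X) ▷ (V ⊗ X))) ⊗≫ (A2.ι U X ⊗ₘ A2.ι V X) := by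
        rw [reassoc_of% hκ, A2.M2_det]; monoidal
    _ = 𝟙 _ ⊗≫ (ld X ◁ U ◁ ((η_ X (rd X) ≫ X ◁ ((P.p X).inv ≫ (P.p X).hom)) ▷ (V ⊗ X)) ≫
          (P.p X).hom ▷ (U ⊗ ((X ⊗ rd X) ⊗ (V ⊗ X)))) ⊗≫ (A2.ι U X ⊗ₘ A2.ι V X) := by
        rw [whisker_exchange, Iso.inv_hom_id, MonoidalCategory.whiskerLeft_id, Category.comp_id]
    _ = A1.ι (U ⊗ V) X ≫ A1.M2 U V ≫ (κ U ⊗ₘ κ V) := by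
        rw [reassoc_of% A1.M2_det]
        simp only [monoidalComp, Category.assoc, tensorHom_comp_tensorHom, hκ]
        rw [← tensorHom_comp_tensorHom, tensorHom_def' ((P.p X).hom ▷ _)]
        monoidal

theorem isIso (V : C) : IsIso (κ V) := by
  obtain ⟨κ', hκ', -⟩ := A2.universal V (A1.M.A.obj V)
    (fun X => ((P.p X).inv ▷ (V ⊗ X)) ≫ A1.ι V X) fun f => by
      rw [← comp_whiskerRight_assoc, ← P.inv_naturality, comp_whiskerRight_assoc, A1.dinat,
        whisker_exchange_assoc]
  refine ⟨κ', A1.jointlyEpi V _ _ fun X => ?_, A2.jointlyEpi V _ _ fun X => ?_⟩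
  · rw [reassoc_of% hκ, hκ', ← comp_whiskerRight_assoc, Iso.hom_inv_id, id_whiskerRight,
      Category.id_comp, Category.comp_id]
  · rw [reassoc_of% hκ', hκ, ← comp_whiskerRight_assoc, Iso.inv_hom_id, id_whiskerRight,
      Category.id_comp, Category.comp_id]

theorem isHopfMonadIso :
    IsHopfMonadIso A1.M A2.M A1.M2 A1.M0 A2.M2 A2.M0 κ :=
  ⟨isIso A1 A2 hκ, naturality A1 A2 hκ, μ_comp A1 A2 hκ, η_comp A1 A2 hκ, comp_M2 A1 A2 hκ,
    comp_M0 A1 A2 hκ⟩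

end κ₁₂

namespace κ₃₄

variable {C : Type} [Category C] [MonoidalCategory C] [RigidCategory C]
  {P : PivotalData C} (A3 : CentralMonadA3 C) (A4 : CentralMonadA4 C P)
  {κ : ∀ V : C, A3.M.A.obj V ⟶ A4.M.A.obj V}
  (hκ : ∀ V X : C, A3.ι V X ≫ κ V = ((X ⊗ V) ◁ (P.p X).hom) ≫ A4.ι V X)

include hκ

theorem naturality {V W : C} (f : V ⟶ W) : A3.M.A.map f ≫ κ W = κ V ≫ A4.M.A.map f := by
  refine A3.jointlyEpi V _ _ fun X => ?_
  rw [← reassoc_of% (A3.nat f X), hκ, reassoc_of% (hκ V X), ← A4.nat f X,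
    whisker_exchange_assoc]

theorem η_comp (V : C) : A3.M.η V ≫ κ V = A4.M.η V := by
  rw [A3.η_det, A4.η_det]
  simp only [Category.assoc, hκ]
  rw [← whiskerLeft_comp_assoc, P.unit]

theorem comp_M0 : κ (𝟙_ C) ≫ A4.M0 = A3.M0 := by
  refine A3.jointlyEpi _ _ _ fun X => ?_
  rw [reassoc_of% hκ, A4.M0_det, A3.M0_det, ← whisker_exchange_assoc, ← whiskerLeft_comp_assoc,
    Iso.hom_inv_id, MonoidalCategory.whiskerLeft_id, Category.id_comp]

theorem μ_comp (V : C) : A3.M.μ V ≫ κ V = A3.M.A.map (κ V) ≫ κ (A4.M.A.obj V) ≫ A4.M.μ V := by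
  refine A3.hom_ext₂ fun X Y => ?_
  calc ((Y ◁ A3.ι V X) ▷ ld Y) ≫ A3.ι (A3.M.A.obj V) Y ≫ A3.M.μ V ≫ κ V
      = 𝟙 _ ⊗≫ (((Y ⊗ X) ⊗ V) ◁ (γmapL X Y ≫ (P.p (Y ⊗ X)).hom)) ≫ A4.ι V (Y ⊗ X) := by
        rw [reassoc_of% A3.μ_det]
        simp only [monoidalComp, Category.assoc, hκ, whiskerLeft_comp]
    _ = 𝟙 _ ⊗≫ (((Y ⊗ X) ⊗ V) ◁ (((P.p X).hom ⊗ₘ (P.p Y).hom) ≫ γmap X Y)) ≫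
          A4.ι V (Y ⊗ X) := by
        rw [P.monoidal]
    _ = _ := by
        rw [← reassoc_of% (A3.nat (κ V) Y), reassoc_of% (hκ (A4.M.A.obj V) Y),
          ← whisker_exchange_assoc, ← whisker_exchange_assoc, ← comp_whiskerRight_assoc,
          ← MonoidalCategory.whiskerLeft_comp, hκ V X]
        simp only [comp_whiskerRight, whiskerLeft_comp, Category.assoc]
        rw [A4.μ_det, tensorHom_def']
        monoidal

theorem comp_M2 (U V : C) : κ (U ⊗ V) ≫ A4.M2 U V = A3.M2 U V ≫ (κ U ⊗ₘ κ V) := by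
  refine A3.jointlyEpi _ _ _ fun X => ?_
  calc A3.ι (U ⊗ V) X ≫ κ (U ⊗ V) ≫ A4.M2 U V
      = 𝟙 _ ⊗≫ (((X ⊗ U) ⊗ (𝟙_ C ⊗ V)) ◁ (P.p X).hom ≫
          ((X ⊗ U) ◁ ((η_ (ld X) X ≫ ((P.p X).hom ▷ X)) ▷ V)) ▷ rd X) ⊗≫
          (A4.ι U X ⊗ₘ A4.ι V X) := by
        rw [reassoc_of% hκ, A4.M2_det]; monoidal
    _ = 𝟙 _ ⊗≫ (((X ⊗ U) ◁ ((η_ (ld X) X ≫ ((P.p X).hom ▷ X)) ▷ V)) ▷ ld X ≫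
          ((X ⊗ U) ⊗ ((rd X ⊗ X) ⊗ V)) ◁ (P.p X).hom) ⊗≫ (A4.ι U X ⊗ₘ A4.ι V X) := by
        rw [← whisker_exchange]
    _ = A3.ι (U ⊗ V) X ≫ A3.M2 U V ≫ (κ U ⊗ₘ κ V) := by
        rw [reassoc_of% A3.M2_det]
        simp only [monoidalComp, Category.assoc, tensorHom_comp_tensorHom, hκ]
        rw [← tensorHom_comp_tensorHom, MonoidalCategory.tensorHom_def (_ ◁ (P.p X).hom)]
        monoidal

theorem isIso (V : C) : IsIso (κ V) := by
  obtain ⟨κ', hκ', -⟩ := A4.universal V (A3.M.A.obj V)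
    (fun X => ((X ⊗ V) ◁ (P.p X).inv) ≫ A3.ι V X) fun f => by
      rw [← whisker_exchange_assoc, A3.dinat, ← whiskerLeft_comp_assoc, P.inv_naturality,
        whiskerLeft_comp_assoc]
  refine ⟨κ', A3.jointlyEpi V _ _ fun X => ?_, A4.jointlyEpi V _ _ fun X => ?_⟩
  · rw [reassoc_of% hκ, hκ', ← whiskerLeft_comp_assoc, Iso.hom_inv_id,
      MonoidalCategory.whiskerLeft_id, Category.id_comp, Category.comp_id]
  · rw [reassoc_of% hκ', hκ, ← whiskerLeft_comp_assoc, Iso.inv_hom_id,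
      MonoidalCategory.whiskerLeft_id, Category.id_comp, Category.comp_id]

theorem isHopfMonadIso :
    IsHopfMonadIso A3.M A4.M A3.M2 A3.M0 A4.M2 A4.M0 κ :=
  ⟨isIso A3 A4 hκ, naturality A3 A4 hκ, μ_comp A3 A4 hκ, η_comp A3 A4 hκ, comp_M2 A3 A4 hκ,
    comp_M0 A3 A4 hκ⟩

end κ₃₄

namespace κ₂₃

variable {C : Type} [Category C] [MonoidalCategory C] [RigidCategory C]
  (A2 : CentralMonadA2 C) (A3 : CentralMonadA3 C) {κ : ∀ V : C, A2.M.A.obj V ⟶ A3.M.A.obj V}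

variable (hκ : ∀ V X : C, A2.ι V X ≫ κ V
      = 𝟙 (rd X ⊗ (V ⊗ X)) ⊗≫ ((rd X ⊗ V) ◁ ωinv X) ≫ A3.ι V (rd X))
include hκ

theorem ι_comp (V X : C) :
    A2.ι V X ≫ κ V = ((α_ _ _ _).inv ≫ ((rd X ⊗ V) ◁ ωinv X)) ≫ A3.ι V (rd X) := by
  rw [hκ]; monoidal

theorem naturality {V W : C} (f : V ⟶ W) : A2.M.A.map f ≫ κ W = κ V ≫ A3.M.A.map f := by
  refine A2.jointlyEpi V _ _ fun X => ?_
  calc A2.ι V X ≫ A2.M.A.map f ≫ κ W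
      = 𝟙 _ ⊗≫ ((rd X ◁ f) ▷ X ≫ (rd X ⊗ W) ◁ ωinv X) ≫ A3.ι W (rd X) := by
        rw [← reassoc_of% (A2.nat f X), ι_comp A2 A3 hκ]; monoidal
    _ = 𝟙 _ ⊗≫ ((rd X ⊗ V) ◁ ωinv X ≫ (rd X ◁ f) ▷ ld (rd X)) ≫ A3.ι W (rd X) := by
        rw [whisker_exchange]
    _ = A2.ι V X ≫ κ V ≫ A3.M.A.map f := by
        rw [reassoc_of% (ι_comp A2 A3 hκ V X), ← A3.nat]; monoidal

theorem η_comp (V : C) : A2.M.η V ≫ κ V = A3.M.η V :=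
  calc A2.M.η V ≫ κ V
      = 𝟙 _ ⊗≫ ((uDual C ▷ V) ▷ 𝟙_ C ≫ (rd (𝟙_ C) ⊗ V) ◁ ωinv (𝟙_ C)) ≫
          A3.ι V (rd (𝟙_ C)) := by
        rw [A2.η_det, Category.assoc, Category.assoc, ι_comp A2 A3 hκ]; monoidal
    _ = 𝟙 _ ⊗≫ ((𝟙_ C ⊗ V) ◁ ωinv (𝟙_ C) ≫ (uDual C ▷ V) ▷ ld (rd (𝟙_ C))) ≫
          A3.ι V (rd (𝟙_ C)) := by
        rw [← whisker_exchange]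
    _ = A3.M.η V := by
        rw [A3.η_det, ← ωinv_comp_ldMap_uDual, MonoidalCategory.whiskerLeft_comp_assoc,
          ← A3.dinat]
        monoidal

theorem comp_M0 : κ (𝟙_ C) ≫ A3.M0 = A2.M0 := by
  refine A2.jointlyEpi _ _ _ fun X => ?_
  calc A2.ι (𝟙_ C) X ≫ κ (𝟙_ C) ≫ A3.M0
      = 𝟙 _ ⊗≫ ((rd X ◁ ωinv X) ≫ ε_ (ld (rd X)) (rd X)) ⊗≫ 𝟙 _ := by
        rw [reassoc_of% (ι_comp A2 A3 hκ), A3.M0_det]; monoidal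
    _ = A2.ι (𝟙_ C) X ≫ A2.M0 := by
        rw [whiskerLeft_ωinv_comp_evaluation, A2.M0_det]; monoidal

theorem comp_M2 (U V : C) : κ (U ⊗ V) ≫ A3.M2 U V = A2.M2 U V ≫ (κ U ⊗ₘ κ V) := by
  refine A2.jointlyEpi _ _ _ fun X => ?_
  calc A2.ι (U ⊗ V) X ≫ κ (U ⊗ V) ≫ A3.M2 U V
      = 𝟙 _ ⊗≫ (((rd X ⊗ U) ⊗ (𝟙_ C ⊗ V)) ◁ ωinv X ≫
          ((rd X ⊗ U) ◁ (η_ (ld (rd X)) (rd X) ▷ V)) ▷ ld (rd X)) ⊗≫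
          (A3.ι U (rd X) ⊗ₘ A3.ι V (rd X)) := by
        rw [reassoc_of% (ι_comp A2 A3 hκ), A3.M2_det]; monoidal
    _ = 𝟙 _ ⊗≫ (((rd X ⊗ U) ◁ ((η_ X (rd X) ≫ ωinv X ▷ rd X) ▷ V)) ▷ X ≫
          ((rd X ⊗ U) ⊗ ((ld (rd X) ⊗ rd X) ⊗ V)) ◁ ωinv X) ⊗≫
          (A3.ι U (rd X) ⊗ₘ A3.ι V (rd X)) := by
        rw [← whisker_exchange, coevaluation_comp_ωinv_whiskerRight]
    _ = A2.ι (U ⊗ V) X ≫ A2.M2 U V ≫ (κ U ⊗ₘ κ V) := by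
        rw [reassoc_of% A2.M2_det]
        simp only [monoidalComp, Category.assoc, tensorHom_comp_tensorHom]
        rw [ι_comp A2 A3 hκ, ι_comp A2 A3 hκ, ← tensorHom_comp_tensorHom,
          MonoidalCategory.tensorHom_def (_ ≫ _)]
        monoidal

theorem ι_ι_μ_comp (V X Y : C) :
    (rd Y ◁ (A2.ι V X ▷ Y)) ≫ A2.ι (A2.M.A.obj V) Y ≫ A2.M.μ V ≫ κ V
      = 𝟙 _ ⊗≫ (((rd Y ⊗ rd X) ⊗ V) ◁ ((ωinv X ⊗ₘ ωinv Y) ≫ γmapL (rd X) (rd Y))) ≫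
          A3.ι V (rd Y ⊗ rd X) :=
  calc (rd Y ◁ (A2.ι V X ▷ Y)) ≫ A2.ι (A2.M.A.obj V) Y ≫ A2.M.μ V ≫ κ V
      = 𝟙 _ ⊗≫ (((γmap Y X ▷ V) ▷ (X ⊗ Y)) ≫ ((rd (X ⊗ Y) ⊗ V) ◁ ωinv (X ⊗ Y))) ≫
          A3.ι V (rd (X ⊗ Y)) := by
        rw [reassoc_of% A2.μ_det]
        simp only [monoidalComp, Category.assoc, ι_comp A2 A3 hκ]
        monoidal
    _ = 𝟙 _ ⊗≫ (((rd Y ⊗ rd X) ⊗ V) ◁ ωinv (X ⊗ Y)) ≫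
          ((γmap Y X ▷ V) ▷ ld (rd (X ⊗ Y))) ≫ A3.ι V (rd (X ⊗ Y)) := by
        rw [← whisker_exchange, Category.assoc]
    _ = _ := by
        rw [A3.dinat, ← whiskerLeft_comp_assoc, ωinv_comp_ldMap_γmap]

theorem ι_ι_map_comp_μ (V X Y : C) :
    (rd Y ◁ (A2.ι V X ▷ Y)) ≫ A2.ι (A2.M.A.obj V) Y ≫
        A2.M.A.map (κ V) ≫ κ (A3.M.A.obj V) ≫ A3.M.μ V
      = 𝟙 _ ⊗≫ (((rd Y ⊗ rd X) ⊗ V) ◁ ((ωinv X ⊗ₘ ωinv Y) ≫ γmapL (rd X) (rd Y))) ≫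
          A3.ι V (rd Y ⊗ rd X) :=
  calc (rd Y ◁ (A2.ι V X ▷ Y)) ≫ A2.ι (A2.M.A.obj V) Y ≫
        A2.M.A.map (κ V) ≫ κ (A3.M.A.obj V) ≫ A3.M.μ V
      = 𝟙 _ ⊗≫ ((rd Y ◁ (((α_ _ _ _).inv ≫ ((rd X ⊗ V) ◁ ωinv X)) ≫ A3.ι V (rd X))) ▷ Y ≫
          (rd Y ⊗ A3.M.A.obj V) ◁ ωinv Y) ⊗≫ A3.ι (A3.M.A.obj V) (rd Y) ≫ A3.M.μ V := by
        rw [← reassoc_of% (A2.nat (κ V) Y), reassoc_of% (ι_comp A2 A3 hκ),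
          ← whiskerLeft_comp_assoc, ← comp_whiskerRight, ι_comp A2 A3 hκ]
        monoidal
    _ = 𝟙 _ ⊗≫ ((rd Y ⊗ (rd X ⊗ (V ⊗ X))) ◁ ωinv Y ≫
          (rd Y ◁ (((α_ _ _ _).inv ≫ ((rd X ⊗ V) ◁ ωinv X)) ≫ A3.ι V (rd X))) ▷ ld (rd Y)) ⊗≫
          A3.ι (A3.M.A.obj V) (rd Y) ≫ A3.M.μ V := by
        rw [← whisker_exchange]
    _ = 𝟙 _ ⊗≫ ((rd Y ⊗ (rd X ⊗ (V ⊗ X))) ◁ ωinv Y) ⊗≫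
          ((rd Y ◁ ((rd X ⊗ V) ◁ ωinv X)) ▷ ld (rd Y)) ⊗≫
          (((rd Y ◁ A3.ι V (rd X)) ▷ ld (rd Y)) ≫ A3.ι (A3.M.A.obj V) (rd Y) ≫ A3.M.μ V) := by
        monoidal
    _ = _ := by
        rw [A3.μ_det, tensorHom_def']; monoidal

theorem μ_comp (V : C) :
    A2.M.μ V ≫ κ V = A2.M.A.map (κ V) ≫ κ (A3.M.A.obj V) ≫ A3.M.μ V :=
  A2.hom_ext₂ fun X Y => (ι_ι_μ_comp A2 A3 hκ V X Y).trans (ι_ι_map_comp_μ A2 A3 hκ V X Y).symm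

theorem isIso (V : C) : IsIso (κ V) := by
  obtain ⟨κ', hκ', -⟩ := A3.universal V (A2.M.A.obj V)
    (fun X => ((ψinv X ▷ V) ▷ ld X) ≫ (α_ _ _ _).hom ≫ A2.ι V (ld X)) (A2.ψinv_ι_dinatural V)
  refine ⟨κ', A2.jointlyEpi V _ _ fun X => ?_, A3.jointlyEpi V _ _ fun X => ?_⟩
  · calc A2.ι V X ≫ κ V ≫ κ'
        = 𝟙 _ ⊗≫ ((rd X ⊗ V) ◁ ωinv X ≫ (ψinv (rd X) ▷ V) ▷ ld (rd X)) ⊗≫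
            A2.ι V (ld (rd X)) := by
          rw [reassoc_of% (ι_comp A2 A3 hκ), hκ']; monoidal
      _ = 𝟙 _ ⊗≫ ((ψinv (rd X) ▷ V) ▷ X) ⊗≫ (rd (ld (rd X)) ◁ (V ◁ ωinv X) ≫
            A2.ι V (ld (rd X))) := by
          rw [whisker_exchange]; monoidal
      _ = 𝟙 _ ⊗≫ ((ψinv (rd X) ≫ rdMap (ωinv X)) ▷ (V ⊗ X)) ≫ A2.ι V X := by
          rw [← A2.dinat]; monoidal
      _ = A2.ι V X ≫ 𝟙 _ := by
          rw [ψinv_comp_rdMap_ωinv]; monoidal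
  · calc A3.ι V X ≫ κ' ≫ κ V
        = 𝟙 _ ⊗≫ ((ψinv X ▷ V) ▷ ld X ≫ (rd (ld X) ⊗ V) ◁ ωinv (ld X)) ≫
            A3.ι V (rd (ld X)) := by
          rw [reassoc_of% hκ', ι_comp A2 A3 hκ]; monoidal
      _ = 𝟙 _ ⊗≫ ((X ⊗ V) ◁ ωinv (ld X)) ≫ (((ψinv X ▷ V) ▷ ld (rd (ld X))) ≫
            A3.ι V (rd (ld X))) := by
          rw [← whisker_exchange]; monoidal
      _ = A3.ι V X ≫ 𝟙 _ := by
          rw [A3.dinat, ← whiskerLeft_comp_assoc, ωinv_comp_ldMap_ψinv]; monoidal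

theorem isHopfMonadIso : IsHopfMonadIso A2.M A3.M A2.M2 A2.M0 A3.M2 A3.M0 κ :=
  ⟨isIso A2 A3 hκ, naturality A2 A3 hκ, μ_comp A2 A3 hκ, η_comp A2 A3 hκ, comp_M2 A2 A3 hκ,
    comp_M0 A2 A3 hκ⟩

end κ₂₃

theorem stmt_1
    (k : Type) [Field k] [IsAlgClosed k]
    (C : Type) [Category C] [Abelian C] [CategoryTheory.Linear k C]
    [MonoidalCategory C] [MonoidalPreadditive C] [CategoryTheory.MonoidalLinear k C]
    [RigidCategory C] [EnoughProjectives C]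
    [∀ X Y : C, FiniteDimensional k (X ⟶ Y)]
    [Simple (𝟙_ C)]
    (hlength : ∀ X : C, WellFoundedLT (Subobject X) ∧ WellFoundedGT (Subobject X))
    (hsimples : ∃ (ι : Type) (_ : Finite ι) (S : ι → C),
      ∀ X : C, Simple X → ∃ i : ι, Nonempty (X ≅ S i))
    (A2 : CentralMonadA2 C) (A3 : CentralMonadA3 C) :
    -- κ₂₃ is an isomorphism of Hopf monads:
    (∀ κ : ∀ V : C, A2.M.A.obj V ⟶ A3.M.A.obj V,
      (∀ V X : C,
        A2.ι V X ≫ κ V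
          = 𝟙 (rd X ⊗ (V ⊗ X)) ⊗≫ ((rd X ⊗ V) ◁ ωinv X) ≫ A3.ι V (rd X)) →
      IsHopfMonadIso A2.M A3.M A2.M2 A2.M0 A3.M2 A3.M0 κ)
    ∧
    -- and in the pivotal case κ₁₂ and κ₃₄ are isomorphisms of Hopf monads:
    (∀ (P : PivotalData C) (A1 : CentralMonadA1 C P) (A4 : CentralMonadA4 C P),
      (∀ κ : ∀ V : C, A1.M.A.obj V ⟶ A2.M.A.obj V,
        (∀ V X : C, A1.ι V X ≫ κ V = ((P.p X).hom ▷ (V ⊗ X)) ≫ A2.ι V X) →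
        IsHopfMonadIso A1.M A2.M A1.M2 A1.M0 A2.M2 A2.M0 κ)
      ∧
      (∀ κ : ∀ V : C, A3.M.A.obj V ⟶ A4.M.A.obj V,
        (∀ V X : C, A3.ι V X ≫ κ V = ((X ⊗ V) ◁ (P.p X).hom) ≫ A4.ι V X) →
        IsHopfMonadIso A3.M A4.M A3.M2 A3.M0 A4.M2 A4.M0 κ)) :=
  ⟨fun _ hκ => κ₂₃.isHopfMonadIso A2 A3 hκ, fun _ A1 A4 =>
    ⟨fun _ hκ => κ₁₂.isHopfMonadIso A1 A2 hκ, fun _ hκ => κ₃₄.isHopfMonadIso A3 A4 hκ⟩⟩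
end

section
/- Let C be a finite tensor category with distinguished invertible object D, and let R: A₂ ⇒ Z₄A₂ be the categorical coaction with components R_U = Z₄(μ_U)∘η̃_{A₂(U)}. Then a morphism λ: 1 → A₂(D) in C is a right monadic cointegral if and only if R_D∘λ = Z₄(λ)∘u₄, where u₄: 1 → Z₄(1) is the unit of the Hopf comonad Z₄. -/
open CategoryTheory MonoidalCategory

set_option maxHeartbeats 1000000

open CategoryTheory MonoidalCategory

noncomputable section ZBase

variable {C : Type} [Category C] [MonoidalCategory C] [RigidCategory C]

/-- the canonical isomorphism `∨𝟙 ⟶ 𝟙`. -/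
def uDualInv (C : Type) [Category C] [MonoidalCategory C] [RigidCategory C] :
    rd (𝟙_ C) ⟶ 𝟙_ C :=
  (ρ_ (rd (𝟙_ C))).inv ≫ ε_ (𝟙_ C) (rd (𝟙_ C))

/-- the canonical isomorphism `∨(Y ⊗ X) ⟶ ∨X ⊗ ∨Y` (inverse of `γmap X Y`). -/
def γmapInv (X Y : C) : rd (Y ⊗ X) ⟶ rd X ⊗ rd Y :=
  (ρ_ (rd (Y ⊗ X))).inv ≫ (rd (Y ⊗ X) ◁ η_ Y (rd Y)) ⊗≫
    (rd (Y ⊗ X) ◁ (Y ◁ (η_ X (rd X) ▷ rd Y))) ⊗≫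
    (ε_ (Y ⊗ X) (rd (Y ⊗ X)) ▷ (rd X ⊗ rd Y)) ⊗≫ 𝟙 (rd X ⊗ rd Y)

/-- the central Hopf comonad `Z₄(V) = ∫_X X ⊗ (V ⊗ ∨X)` with its canonical comonad
structure and lax monoidal unit. -/
structure CentralComonadZ4 (C : Type) [Category C] [MonoidalCategory C]
    [RigidCategory C] where
  Z : C ⥤ C
  π : ∀ V X : C, Z.obj V ⟶ X ⊗ (V ⊗ rd X)
  dinat : ∀ (V : C) {X Y : C} (f : X ⟶ Y),
    π V X ≫ (f ▷ (V ⊗ rd X)) = π V Y ≫ (Y ◁ (V ◁ rightAdjointMate f))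
  nat : ∀ {V W : C} (g : V ⟶ W) (X : C),
    π V X ≫ (X ◁ (g ▷ rd X)) = Z.map g ≫ π W X
  universal : ∀ (V W : C) (g : ∀ X : C, W ⟶ X ⊗ (V ⊗ rd X)),
    (∀ {X Y : C} (f : X ⟶ Y),
      g X ≫ (f ▷ (V ⊗ rd X)) = g Y ≫ (Y ◁ (V ◁ rightAdjointMate f))) →
    ∃! h : W ⟶ Z.obj V, ∀ X : C, h ≫ π V X = g X
  /-- comonad comultiplication -/
  δ : ∀ V : C, Z.obj V ⟶ Z.obj (Z.obj V)
  /-- comonad counit -/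
  εZ : ∀ V : C, Z.obj V ⟶ V
  δ_nat : ∀ {V W : C} (f : V ⟶ W), Z.map f ≫ δ W = δ V ≫ Z.map (Z.map f)
  εZ_nat : ∀ {V W : C} (f : V ⟶ W), Z.map f ≫ εZ W = εZ V ≫ f
  coassoc : ∀ V : C, δ V ≫ Z.map (δ V) = δ V ≫ δ (Z.obj V)
  counit_l : ∀ V : C, δ V ≫ εZ (Z.obj V) = 𝟙 _
  counit_r : ∀ V : C, δ V ≫ Z.map (εZ V) = 𝟙 _
  δ_det : ∀ V X Y : C,
    δ V ≫ π (Z.obj V) Y ≫ (Y ◁ (π V X ▷ rd Y))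
      = π V (Y ⊗ X) ≫ ((Y ⊗ X) ◁ (V ◁ γmapInv X Y)) ⊗≫
          𝟙 (Y ⊗ ((X ⊗ (V ⊗ rd X)) ⊗ rd Y))
  εZ_det : ∀ V : C,
    εZ V = π V (𝟙_ C) ≫ (λ_ (V ⊗ rd (𝟙_ C))).hom ≫ (V ◁ uDualInv C) ≫ (ρ_ V).hom
  /-- the unit of the lax monoidal structure of `Z₄` -/
  u : 𝟙_ C ⟶ Z.obj (𝟙_ C)
  u_det : ∀ X : C, u ≫ π (𝟙_ C) X = η_ X (rd X) ≫ (X ◁ (λ_ (rd X)).inv)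

/-- the adjunction `A₂ ⊣ Z₄` of the paper, with its canonical counit. -/
structure AdjunctionData (A2 : CentralMonadA2 C) (Z4 : CentralComonadZ4 C) where
  /-- the unit `η̃ : Id ⇒ Z₄A₂` -/
  unit : ∀ V : C, V ⟶ Z4.Z.obj (A2.M.A.obj V)
  /-- the counit `ε̃ : A₂Z₄ ⇒ Id` -/
  counit : ∀ V : C, A2.M.A.obj (Z4.Z.obj V) ⟶ V
  unit_nat : ∀ {V W : C} (f : V ⟶ W),
    f ≫ unit W = unit V ≫ Z4.Z.map (A2.M.A.map f)
  counit_nat : ∀ {V W : C} (f : V ⟶ W),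
    A2.M.A.map (Z4.Z.map f) ≫ counit W = counit V ≫ f
  tri₁ : ∀ V : C, A2.M.A.map (unit V) ≫ counit (A2.M.A.obj V) = 𝟙 _
  tri₂ : ∀ V : C, unit (Z4.Z.obj V) ≫ Z4.Z.map (counit V) = 𝟙 _
  counit_det : ∀ V X : C,
    A2.ι (Z4.Z.obj V) X ≫ counit V
      = (rd X ◁ (Z4.π V X ▷ X)) ⊗≫ (ε_ X (rd X) ▷ (V ⊗ (rd X ⊗ X))) ⊗≫
          (V ◁ ε_ X (rd X)) ⊗≫ 𝟙 V

end ZBase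

/-! Transposing along `A₂ ⊣ Z₄` turns `R_D ∘ λ = Z₄(λ) ∘ u₄` into the cointegral equation:
the adjunct of `R_D ∘ λ` is `μ_D ∘ A₂(λ)` by the triangle identity, and the adjunct of
`Z₄(λ) ∘ u₄` is `λ ∘ ε₂`, because the adjunct of `u₄` is the counit `ε₂` of `A₂`.  The last
fact is checked on the coend components `∨X ⊗ (𝟙 ⊗ X) ⟶ A₂(𝟙)`, where it reduces to a
zigzag identity for the duality `X ⊣ ∨X`. -/

namespace CentralMonadA2

variable {C : Type} [Category C] [MonoidalCategory C] [RigidCategory C]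

lemma hom_ext (A2 : CentralMonadA2 C) {V W : C} {h h' : A2.M.A.obj V ⟶ W}
    (H : ∀ X : C, A2.ι V X ≫ h = A2.ι V X ≫ h') : h = h' := by
  obtain ⟨_, -, huniq⟩ := A2.universal V W (fun X => A2.ι V X ≫ h) fun f => by
    simp only [← Category.assoc, A2.dinat]
  exact (huniq h fun _ => rfl).trans (huniq h' fun X => (H X).symm).symm

end CentralMonadA2

namespace AdjunctionData

variable {C : Type} [Category C] [MonoidalCategory C] [RigidCategory C]
  {A2 : CentralMonadA2 C} {Z4 : CentralComonadZ4 C} (adj : AdjunctionData A2 Z4)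

lemma unit_comp_map_map_comp_counit {V W : C} (g : V ⟶ Z4.Z.obj W) :
    adj.unit V ≫ Z4.Z.map (A2.M.A.map g ≫ adj.counit W) = g := by
  rw [Functor.map_comp, ← Category.assoc, ← adj.unit_nat, Category.assoc, adj.tri₂,
    Category.comp_id]

lemma map_comp_counit_inj {V W : C} {g g' : V ⟶ Z4.Z.obj W} :
    A2.M.A.map g ≫ adj.counit W = A2.M.A.map g' ≫ adj.counit W ↔ g = g' :=
  ⟨fun h => by
    rw [← adj.unit_comp_map_map_comp_counit g, h, adj.unit_comp_map_map_comp_counit],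
   fun h => h ▸ rfl⟩

lemma map_comp_unit_comp_map_comp_counit {V U W : C} (f : V ⟶ U)
    (h : A2.M.A.obj U ⟶ W) :
    A2.M.A.map (f ≫ adj.unit U ≫ Z4.Z.map h) ≫ adj.counit W = A2.M.A.map f ≫ h := by
  simp only [Functor.map_comp, Category.assoc, adj.counit_nat]
  rw [← Category.assoc (A2.M.A.map (adj.unit U)), adj.tri₁, Category.id_comp]

lemma map_u_comp_counit : A2.M.A.map Z4.u ≫ adj.counit (𝟙_ C) = A2.M0 := by
  refine A2.hom_ext fun X => ?_
  have zigzag : (rd X ◁ η_ X (rd X)) ≫ (α_ _ _ _).inv ≫ (ε_ X (rd X) ▷ rd X)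
      = (ρ_ (rd X)).hom ≫ (λ_ (rd X)).inv :=
    ExactPairing.coevaluation_evaluation X (rd X)
  rw [A2.M0_det, ← Category.assoc, ← A2.nat, Category.assoc, adj.counit_det]
  simp only [monoidalComp]
  rw [← MonoidalCategory.whiskerLeft_comp_assoc, ← comp_whiskerRight, Z4.u_det]
  calc _ = (α_ (rd X) (𝟙_ C) X).inv ≫
        (((rd X ◁ η_ X (rd X)) ≫ (α_ _ _ _).inv ≫ (ε_ X (rd X) ▷ rd X)) ▷ X) ≫
        ((λ_ (rd X)).hom ▷ X) ≫ ε_ X (rd X) := by monoidal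
    _ = _ := by rw [zigzag]; monoidal

end AdjunctionData

theorem stmt_6
    (k : Type) [Field k] [IsAlgClosed k]
    (C : Type) [Category C] [Abelian C] [CategoryTheory.Linear k C]
    [MonoidalCategory C] [MonoidalPreadditive C] [CategoryTheory.MonoidalLinear k C]
    [RigidCategory C] [EnoughProjectives C]
    [∀ X Y : C, FiniteDimensional k (X ⟶ Y)]
    [Simple (𝟙_ C)]
    (hlength : ∀ X : C, WellFoundedLT (Subobject X) ∧ WellFoundedGT (Subobject X))
    (hsimples : ∃ (ι : Type) (_ : Finite ι) (S : ι → C),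
      ∀ X : C, Simple X → ∃ i : ι, Nonempty (X ≅ S i))
    -- `P` is the projective cover of the unit and `D` its socle
    (P : C) (hP : Projective P) (π : P ⟶ 𝟙_ C) (hπ : Epi π)
    (hess : ∀ (Y : C) (j : Y ⟶ P), Mono j → Epi (j ≫ π) → IsIso j)
    (D : C) (iD : D ⟶ P) (hiD : Mono iD) (hD_ne : ¬ Limits.IsZero D)
    (hD_min : ∀ (Y : C) (j : Y ⟶ P), Mono j → ¬ Limits.IsZero Y →
      ∃ m : D ⟶ Y, m ≫ j = iD)
    -- the central Hopf monad, central Hopf comonad, and the adjunction `A₂ ⊣ Z₄`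
    (A2 : CentralMonadA2 C) (Z4 : CentralComonadZ4 C) (adj : AdjunctionData A2 Z4)
    (lam : 𝟙_ C ⟶ A2.M.A.obj D) :
    -- `λ` is a right monadic cointegral iff `R_D ∘ λ = Z₄(λ) ∘ u₄`
    (A2.M.A.map lam ≫ A2.M.μ D = A2.M0 ≫ lam)
      ↔ lam ≫ (adj.unit (A2.M.A.obj D) ≫ Z4.Z.map (A2.M.μ D)) = Z4.u ≫ Z4.Z.map lam := by
  rw [← adj.map_comp_counit_inj, adj.map_comp_unit_comp_map_comp_counit, Functor.map_comp,
    Category.assoc, adj.counit_nat, ← Category.assoc, adj.map_u_comp_counit]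
end

section
/- Let H be a finite-dimensional Hopf algebra over an algebraically closed field k with modulus γ, and let λ∈H* be a right cointegral, i.e. (λ⊗id)(Δ(h)) = λ(h)·1 for all h∈H. Then for all a,h∈H one has γ⁻¹(h_(2)) · λ( S(h_(1)) · a · h_(3) ) = ε(h) · λ(a), where h_(1)⊗h_(2)⊗h_(3) denotes the iterated coproduct (Δ⊗id)(Δ(h)). -/
/-!
Put `ρ(x) = x₁ γ(S x₂)` and `P(x) = γ(x₁) S(x₂)`; since `γ ∘ S` is the convolution inverse of
`γ`, the maps `ρ` and `P` satisfy `ρ(h₁) P(h₂) = ε(h) 1`, and the left-hand side of the theorem is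
`λ(S(ρ h₁) a h₂)`. From the left integral `c` and the modulus one gets
`(S g ⊗ 1) Δc = (1 ⊗ g) Δc` and `Δc (g ⊗ 1) = Δc (1 ⊗ P g)`, which together with the cointegral
property give `λ(S(u) c₁ v) c₂ = λ(c) u P(v)`.

If `λ(c) ≠ 0`, the form `(x, y) ↦ λ(x y)` is nondegenerate, and this yields
`λ(S(c₂) a) c₁ = λ(c) a`. Substituting it for `a`,
`λ(c) λ(S(ρ h₁) a h₂) = λ(S(c₂) a) λ(S(ρ h₁) c₁ h₂) = λ(S(λ(c) ρ(h₁) P(h₂)) a) = λ(c) ε(h) λ(a)`.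
If `λ(c) = 0`, then `λ = 0`.
-/

open TensorProduct LinearMap Coalgebra HopfAlgebra WithConv
open scoped RingTheory.LinearMap

section Slice

variable {R M N : Type*} [CommSemiring R]

noncomputable def leftSlice [AddCommMonoid M] [Module R M] [AddCommMonoid N] [Module R N]
    (f : M →ₗ[R] R) : M ⊗[R] N →ₗ[R] N :=
  (TensorProduct.lid R N).toLinearMap ∘ₗ f.rTensor N

@[simp]
lemma leftSlice_tmul [AddCommMonoid M] [Module R M] [AddCommMonoid N] [Module R N]
    (f : M →ₗ[R] R) (m : M) (n : N) : leftSlice f (m ⊗ₜ[R] n) = f m • n := by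
  simp [leftSlice]

variable [Semiring M] [Algebra R M] [Semiring N] [Algebra R N]

lemma leftSlice_mul_one_tmul (f : M →ₗ[R] R) (t : M ⊗[R] N) (b : N) :
    leftSlice f (t * (1 ⊗ₜ b)) = leftSlice f t * b := by
  induction t using TensorProduct.induction_on with
  | zero => simp
  | tmul m n => simp [Algebra.TensorProduct.tmul_mul_tmul]
  | add s t hs ht => simp [add_mul, hs, ht]

lemma leftSlice_one_tmul_mul (f : M →ₗ[R] R) (t : M ⊗[R] N) (b : N) :
    leftSlice f ((1 ⊗ₜ b) * t) = b * leftSlice f t := by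
  induction t using TensorProduct.induction_on with
  | zero => simp
  | tmul m n => simp [Algebra.TensorProduct.tmul_mul_tmul]
  | add s t hs ht => simp [mul_add, hs, ht]

end Slice

lemma Coalgebra.sum_counit_right_smul {R A ι : Type*} [CommSemiring R] [AddCommMonoid A]
    [Module R A] [Coalgebra R A] {a : A} (𝓡 : Repr R a ι) :
    ∑ i ∈ 𝓡.index, counit (R := R) (𝓡.right i) • 𝓡.left i = a := by
  simpa only [map_sum, lift.tmul, flip_apply, lsmul_apply, one_smul] using
    congr(TensorProduct.lift (LinearMap.lsmul R A).flip $(sum_tmul_counit_eq 𝓡))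

section Basis

variable {R M N κ : Type*} [CommSemiring R] [AddCommMonoid M] [Module R M] [AddCommMonoid N]
  [Module R N] [Fintype κ]

lemma TensorProduct.sum_rid_lTensor_coord_tmul (𝒞 : Module.Basis κ R N) (t : M ⊗[R] N) :
    ∑ i, TensorProduct.rid R M ((𝒞.coord i).lTensor M t) ⊗ₜ 𝒞 i = t := by
  induction t using TensorProduct.induction_on with
  | zero => simp
  | tmul m n =>
    simp_rw [lTensor_tmul, rid_tmul, Module.Basis.coord_apply, smul_tmul, ← tmul_sum,
      Module.Basis.sum_repr]
  | add s t hs ht => simp_rw [map_add, add_tmul, Finset.sum_add_distrib, hs, ht]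

noncomputable def Coalgebra.Repr.ofBasis [Coalgebra R N] (𝒞 : Module.Basis κ R N) (a : N) :
    Repr R a κ where
  index := Finset.univ
  left i := _root_.TensorProduct.rid R N ((𝒞.coord i).lTensor N (comul a))
  right := 𝒞
  eq := TensorProduct.sum_rid_lTensor_coord_tmul 𝒞 (comul a)

end Basis

lemma LinearMap.SeparatingLeft.separatingRight {K V : Type*} [Field K] [AddCommGroup V]
    [Module K V] [FiniteDimensional K V] {B : V →ₗ[K] V →ₗ[K] K} (hB : B.SeparatingLeft) :
    B.SeparatingRight := by
  intro y hy
  have hinj : Function.Injective B :=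
    LinearMap.ker_eq_bot.mp (separatingLeft_iff_ker_eq_bot.mp hB)
  have hsurj : Function.Surjective B :=
    (injective_iff_surjective_of_finrank_eq_finrank Subspace.dual_finrank_eq.symm).mp hinj
  refine (Module.forall_dual_apply_eq_zero_iff K y).mp fun φ ↦ ?_
  obtain ⟨x, rfl⟩ := hsurj φ
  exact hy x

namespace HopfAlgebra

variable {R A ι : Type*} [CommSemiring R] [Semiring A] [HopfAlgebra R A] {a : A}

lemma sum_antipode_tmul_one_mul_comul (𝓡 : Repr R a ι) :
    ∑ i ∈ 𝓡.index, (antipode R (𝓡.left i) ⊗ₜ[R] (1 : A)) * comul (𝓡.right i) = 1 ⊗ₜ a := by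
  have hpure (x : A) (t : A ⊗[R] A) : (antipode R x ⊗ₜ[R] (1 : A)) * t =
      (μ ∘ₗ (antipode R).rTensor A).rTensor A ((TensorProduct.assoc R A A A).symm (x ⊗ₜ t)) := by
    induction t using TensorProduct.induction_on with
    | zero => simp
    | tmul p q => simp
    | add s t hs ht => simp [mul_add, tmul_add, hs, ht]
  calc _ = (μ ∘ₗ (antipode R).rTensor A).rTensor A
        ((TensorProduct.assoc R A A A).symm (comul.lTensor A (comul a))) := by
          simp_rw [hpure, ← 𝓡.eq, map_sum, lTensor_tmul]
    _ = 1 ⊗ₜ a := by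
      rw [coassoc_symm_apply, ← comp_apply, ← rTensor_comp, comp_assoc,
        mul_antipode_rTensor_comul, rTensor_comp, comp_apply, rTensor_counit_comul]
      simp

lemma sum_comul_mul_one_tmul_antipode (𝓡 : Repr R a ι) :
    ∑ i ∈ 𝓡.index, comul (𝓡.left i) * ((1 : A) ⊗ₜ[R] antipode R (𝓡.right i)) = a ⊗ₜ 1 := by
  have hpure (t : A ⊗[R] A) (x : A) : t * ((1 : A) ⊗ₜ[R] antipode R x) =
      (μ ∘ₗ (antipode R).lTensor A).lTensor A ((TensorProduct.assoc R A A A) (t ⊗ₜ x)) := by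
    induction t using TensorProduct.induction_on with
    | zero => simp
    | tmul p q => simp
    | add s t hs ht => simp [add_mul, add_tmul, hs, ht]
  calc _ = (μ ∘ₗ (antipode R).lTensor A).lTensor A
        ((TensorProduct.assoc R A A A) (comul.rTensor A (comul a))) := by
          simp_rw [hpure, ← 𝓡.eq, map_sum, rTensor_tmul]
    _ = a ⊗ₜ 1 := by
      rw [coassoc_apply, ← comp_apply, ← lTensor_comp, comp_assoc, mul_antipode_lTensor_comul,
        lTensor_comp, comp_apply, lTensor_counit_comul]
      simp

lemma rid_comp_lTensor_comp_comul (f : A →ₗ[R] R) :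
    (TensorProduct.rid R A).toLinearMap ∘ₗ f.lTensor A ∘ₗ comul =
      (toConv LinearMap.id * toConv (η ∘ₗ f)).ofConv := by
  ext x
  rw [(ℛ R x).convMul_apply, comp_apply, comp_apply, ← (ℛ R x).eq]
  simp [Algebra.smul_def, Algebra.commutes]

lemma algHom_comp_antipode_mul_algHom (χ : A →ₐ[R] R) :
    toConv (Algebra.linearMap R A ∘ₗ χ.toLinearMap ∘ₗ antipode R) *
      toConv (η ∘ₗ χ.toLinearMap) = 1 := by
  ext x
  simp [(ℛ R x).convMul_apply, ← map_mul, ← map_sum, sum_antipode_mul_eq_algebraMap_counit]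

end HopfAlgebra

section Integrals

variable {R H ι κ : Type*} [CommSemiring R] [Semiring H] [HopfAlgebra R H]

variable (R) in
def IsLeftIntegral (c : H) : Prop := ∀ h : H, h * c = counit (R := R) h • c

def IsRightCointegral (lam : H →ₗ[R] R) : Prop := ∀ h : H, leftSlice lam (comul h) = lam h • 1

lemma IsLeftIntegral.antipode_tmul_one_mul_comul {c : H} (hc : IsLeftIntegral R c) (g : H) :
    (antipode R g ⊗ₜ[R] (1 : H)) * comul c = (1 ⊗ₜ g) * comul c := by
  let 𝓖 := ℛ R g
  calc (antipode R g ⊗ₜ[R] (1 : H)) * comul c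
      = ∑ i ∈ 𝓖.index,
          counit (R := R) (𝓖.right i) • ((antipode R (𝓖.left i) ⊗ₜ[R] 1) * comul c) := by
        simp_rw [← smul_mul_assoc, ← Finset.sum_mul, smul_tmul', ← map_smul, ← sum_tmul,
          ← map_sum, sum_counit_right_smul 𝓖]
    _ = ∑ i ∈ 𝓖.index, (antipode R (𝓖.left i) ⊗ₜ[R] 1) * comul (𝓖.right i) * comul c := by
        simp_rw [mul_assoc, ← Bialgebra.comul_mul, hc _, map_smul, mul_smul_comm]
    _ = (1 ⊗ₜ g) * comul c := by rw [← Finset.sum_mul, sum_antipode_tmul_one_mul_comul]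

lemma comul_mul_tmul_one_of_mul_eq_smul {c : H} {γ : H →ₗ[R] R}
    (hγ : ∀ h : H, c * h = γ h • c) (g : H) :
    comul c * (g ⊗ₜ[R] (1 : H)) =
      comul c * ((1 : H) ⊗ₜ (toConv (η ∘ₗ γ) * toConv (antipode R)).ofConv g) := by
  let 𝓖 := ℛ R g
  calc comul c * (g ⊗ₜ[R] (1 : H))
      = ∑ i ∈ 𝓖.index, comul c * comul (𝓖.left i) * ((1 : H) ⊗ₜ antipode R (𝓖.right i)) := by
        simp_rw [mul_assoc, ← Finset.mul_sum, sum_comul_mul_one_tmul_antipode]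
    _ = ∑ i ∈ 𝓖.index, γ (𝓖.left i) • (comul c * ((1 : H) ⊗ₜ antipode R (𝓖.right i))) := by
        simp_rw [← Bialgebra.comul_mul, hγ, map_smul, smul_mul_assoc]
    _ = _ := by
        simp only [𝓖.convMul_apply, coe_comp, Function.comp_apply, Algebra.linearMap_apply,
          ← Algebra.smul_def, tmul_sum, tmul_smul, Finset.mul_sum, mul_smul_comm]

variable {lam : H →ₗ[R] R}

lemma IsRightCointegral.sum_apply_mul_smul_antipode (hlam : IsRightCointegral lam)
    {x y : H} (𝓧 : Repr R x ι) (𝓨 : Repr R y κ) :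
    ∑ i ∈ 𝓨.index, lam (x * 𝓨.left i) • antipode R (𝓨.right i) =
      ∑ j ∈ 𝓧.index, lam (𝓧.left j * y) • 𝓧.right j := by
  calc _ = ∑ i ∈ 𝓨.index,
        leftSlice lam (comul (x * 𝓨.left i) * ((1 : H) ⊗ₜ antipode R (𝓨.right i))) := by
        simp_rw [leftSlice_mul_one_tmul, hlam _, smul_mul_assoc, one_mul]
    _ = leftSlice lam (comul x * (y ⊗ₜ 1)) := by
        simp_rw [Bialgebra.comul_mul, mul_assoc, ← map_sum, ← Finset.mul_sum,
          sum_comul_mul_one_tmul_antipode]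
    _ = _ := by
        rw [← 𝓧.eq]
        simp [Finset.sum_mul, Algebra.TensorProduct.tmul_mul_tmul]

lemma IsRightCointegral.sum_apply_mul_smul_antipode_of_isLeftIntegral
    (hlam : IsRightCointegral lam) {c : H} (hc : IsLeftIntegral R c) (𝓒 : Repr R c ι) (x : H) :
    ∑ i ∈ 𝓒.index, lam (x * 𝓒.left i) • antipode R (𝓒.right i) = lam c • x := by
  rw [hlam.sum_apply_mul_smul_antipode (ℛ R x) 𝓒]
  simp_rw [hc _, map_smul, smul_eq_mul, mul_comm _ (lam c), mul_smul, ← Finset.smul_sum,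
    sum_counit_smul]

lemma IsRightCointegral.sum_apply_antipode_mul_mul_smul (hlam : IsRightCointegral lam)
    {c : H} (hc : IsLeftIntegral R c) {γ : H →ₗ[R] R} (hγ : ∀ h : H, c * h = γ h • c)
    (𝓒 : Repr R c ι) (u v : H) :
    ∑ i ∈ 𝓒.index, lam (antipode R u * 𝓒.left i * v) • 𝓒.right i =
      lam c • (u * (toConv (η ∘ₗ γ) * toConv (antipode R)).ofConv v) := by
  calc _ = leftSlice lam ((antipode R u ⊗ₜ[R] (1 : H)) * comul c * (v ⊗ₜ 1)) := by
        rw [← 𝓒.eq]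
        simp [Finset.mul_sum, Finset.sum_mul, Algebra.TensorProduct.tmul_mul_tmul]
    _ = leftSlice lam (((1 : H) ⊗ₜ u) *
          (comul c * ((1 : H) ⊗ₜ (toConv (η ∘ₗ γ) * toConv (antipode R)).ofConv v))) := by
        rw [hc.antipode_tmul_one_mul_comul, mul_assoc, comul_mul_tmul_one_of_mul_eq_smul hγ]
    _ = _ := by
        rw [leftSlice_one_tmul_mul, leftSlice_mul_one_tmul, hlam c, smul_mul_assoc, one_mul,
          mul_smul_comm]

end Integrals

section FiniteDimensional

variable {k H ι : Type*} [Field k] [Ring H] [HopfAlgebra k H] [FiniteDimensional k H]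
  {lam : H →ₗ[k] k} {c : H}

lemma IsRightCointegral.separatingRight_mul_compr₂ (hlam : IsRightCointegral lam)
    (hc : IsLeftIntegral k c) (hθ : lam c ≠ 0) :
    ((LinearMap.mul k H).compr₂ lam).SeparatingRight := by
  refine LinearMap.SeparatingLeft.separatingRight fun x hx ↦ ?_
  have h := hlam.sum_apply_mul_smul_antipode_of_isLeftIntegral hc (ℛ k c) x
  simp only [compr₂_apply, mul_apply'] at hx
  simp_rw [hx, zero_smul, Finset.sum_const_zero] at h
  exact (smul_eq_zero.mp h.symm).resolve_left hθ

lemma IsRightCointegral.sum_apply_antipode_mul_smul (hlam : IsRightCointegral lam)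
    (hc : IsLeftIntegral k c) (hθ : lam c ≠ 0) (𝓒 : Repr k c ι) (x : H) :
    ∑ i ∈ 𝓒.index, lam (antipode k (𝓒.right i) * x) • 𝓒.left i = lam c • x := by
  rw [← sub_eq_zero]
  refine hlam.separatingRight_mul_compr₂ hc hθ _ fun w ↦ ?_
  have h := congr(lam ($(hlam.sum_apply_mul_smul_antipode_of_isLeftIntegral hc 𝓒 w) * x))
  simp_rw [Finset.sum_mul, map_sum, smul_mul_assoc, map_smul, smul_eq_mul] at h
  simp [mul_sub, Finset.mul_sum, h, mul_comm]

/- The left radical `{x | ∀ y, λ(x y) = 0}` is a right ideal, and by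
`sum_apply_mul_smul_antipode` it contains the left legs of `Δx` for each of its elements `x`;
hence it contains `ε(x) 1 = x₁ S(x₂)`. So either `1` lies in it and `λ = 0`, or `ε` vanishes on
it, and then `c = ε(c₁) c₂ = 0`. -/
lemma IsRightCointegral.eq_zero_of_apply_eq_zero (hlam : IsRightCointegral lam) (hc0 : c ≠ 0)
    {γ : H →ₗ[k] k} (hγ : ∀ h : H, c * h = γ h • c) (hθ : lam c = 0) : lam = 0 := by
  let b := Module.finBasis k H
  have legs (x : H) (hx : ∀ y, lam (x * y) = 0) (i) (y : H) :
      lam ((Repr.ofBasis b x).left i * y) = 0 := by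
    have h := hlam.sum_apply_mul_smul_antipode (Repr.ofBasis b x) (ℛ k y)
    simp_rw [hx, zero_smul, Finset.sum_const_zero] at h
    exact Fintype.linearIndependent_iff.mp b.linearIndependent _ h.symm i
  have counit_mul (x : H) (hx : ∀ y, lam (x * y) = 0) (y : H) :
      counit (R := k) x * lam y = 0 := by
    have h := congr(lam ($(sum_mul_antipode_eq_smul (Repr.ofBasis b x)) * y))
    simp_rw [Finset.sum_mul, mul_assoc, map_sum, legs x hx, Finset.sum_const_zero,
      smul_mul_assoc, one_mul, map_smul, smul_eq_mul] at h
    exact h.symm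
  have hcK (y : H) : lam (c * y) = 0 := by rw [hγ, map_smul, hθ, smul_zero]
  by_contra hlam0
  obtain ⟨y, hy⟩ : ∃ y, lam y ≠ 0 := by
    by_contra! h
    exact hlam0 (LinearMap.ext h)
  apply hc0
  rw [← sum_counit_smul (Repr.ofBasis b c)]
  refine Finset.sum_eq_zero fun i _ ↦ ?_
  rw [(mul_eq_zero.mp (counit_mul _ (legs c hcK i) y)).resolve_right hy, zero_smul]

theorem IsRightCointegral.sum_apply_antipode_mul_mul (hlam : IsRightCointegral lam)
    (hc : IsLeftIntegral k c) (hc0 : c ≠ 0) (γ : H →ₐ[k] k) (hγ : ∀ h : H, c * h = γ h • c)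
    {h : H} (𝓗 : Repr k h ι) (a : H) :
    ∑ i ∈ 𝓗.index, lam (antipode k ((toConv LinearMap.id *
        toConv (η ∘ₗ γ.toLinearMap ∘ₗ antipode k)).ofConv (𝓗.left i)) * a * 𝓗.right i) =
      counit h * lam a := by
  by_cases hθ : lam c = 0
  · simp [hlam.eq_zero_of_apply_eq_zero hc0 (γ := γ.toLinearMap) hγ hθ]
  refine mul_left_cancel₀ hθ ?_
  set ρ := (toConv LinearMap.id * toConv (η ∘ₗ γ.toLinearMap ∘ₗ antipode k)).ofConv
  set P := (toConv (η ∘ₗ γ.toLinearMap) * toConv (antipode k)).ofConv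
  have hρP : ∑ i ∈ 𝓗.index, ρ (𝓗.left i) * P (𝓗.right i) = counit (R := k) h • (1 : H) := by
    rw [← 𝓗.convMul_apply (toConv ρ) (toConv P)]
    simp only [ρ, P, toConv_ofConv]
    rw [mul_assoc, ← mul_assoc (toConv (η ∘ₗ γ.toLinearMap ∘ₗ antipode k)),
      algHom_comp_antipode_mul_algHom, one_mul, id_mul_antipode]
    simp [Algebra.algebraMap_eq_smul_one]
  let 𝓒 := ℛ k c
  calc lam c * ∑ i ∈ 𝓗.index, lam (antipode k (ρ (𝓗.left i)) * a * 𝓗.right i)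
      = ∑ i ∈ 𝓗.index, ∑ j ∈ 𝓒.index, lam (antipode k (𝓒.right j) * a) *
          lam (antipode k (ρ (𝓗.left i)) * 𝓒.left j * 𝓗.right i) := by
        rw [Finset.mul_sum]
        refine Finset.sum_congr rfl fun i _ ↦ ?_
        rw [← smul_eq_mul, ← map_smul, ← smul_mul_assoc, ← mul_smul_comm,
          ← hlam.sum_apply_antipode_mul_smul hc hθ 𝓒 a]
        simp only [Finset.mul_sum, Finset.sum_mul, map_sum, mul_smul_comm, smul_mul_assoc,
          map_smul, smul_eq_mul]
    _ = lam (antipode k (∑ i ∈ 𝓗.index, ∑ j ∈ 𝓒.index,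
          lam (antipode k (ρ (𝓗.left i)) * 𝓒.left j * 𝓗.right i) • 𝓒.right j) * a) := by
        simp_rw [map_sum, Finset.sum_mul, map_sum, map_smul, smul_mul_assoc, map_smul,
          smul_eq_mul, mul_comm]
    _ = lam (antipode k (lam c • ∑ i ∈ 𝓗.index, ρ (𝓗.left i) * P (𝓗.right i)) * a) := by
        simp_rw [hlam.sum_apply_antipode_mul_mul_smul hc (γ := γ.toLinearMap) hγ 𝓒,
          Finset.smul_sum]
        rfl
    _ = lam c * (counit h * lam a) := by
        rw [hρP]
        simp only [smul_smul, map_smul, one_mul, smul_mul_assoc, antipode_one, smul_eq_mul]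
        ring

end FiniteDimensional

theorem stmt_7_general
    (k : Type) [Field k]
    (H : Type) [Ring H] [HopfAlgebra k H] [FiniteDimensional k H]
    -- `c` is a non-zero left integral for `H`
    (c : H) (hc_ne : c ≠ 0)
    (hc_left_integral : ∀ h : H, h * c = (Coalgebra.counit (R := k) h) • c)
    -- `γ` is the modulus of `H`
    (γ : H →ₐ[k] k) (hγ : ∀ h : H, c * h = γ h • c)
    -- `lam` is a right cointegral:  (λ ⊗ id)(Δ h) = λ(h) • 1
    (lam : H →ₗ[k] k)
    (hlam : ∀ h : H,
      (TensorProduct.lid k H)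
        ((LinearMap.rTensor H lam) (Coalgebra.comul (R := k) h)) = lam h • (1 : H)) :
    -- conclusion: γ⁻¹(h₍₂₎) · λ(S(h₍₁₎)·a·h₍₃₎) = ε(h) · λ(a) for all a, h
    ∀ a h : H,
      lam ((LinearMap.mul' k H)
        ((LinearMap.rTensor H ((LinearMap.mulRight k a).comp (HopfAlgebra.antipode (R := k))))
          ((LinearMap.rTensor H
              ((TensorProduct.rid k H).toLinearMap.comp
                (LinearMap.lTensor H ((γ.toLinearMap).comp (HopfAlgebra.antipode (R := k))))))
            ((LinearMap.rTensor H (Coalgebra.comul (R := k))) (Coalgebra.comul (R := k) h)))))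
      = (Coalgebra.counit (R := k) h) * lam a := by
  intro a h
  rw [← rTensor_comp_apply, ← rTensor_comp_apply]
  simp only [comp_assoc]
  rw [rid_comp_lTensor_comp_comul, ← (ℛ k h).eq]
  simpa [map_sum, mul_assoc] using
    IsRightCointegral.sum_apply_antipode_mul_mul hlam hc_left_integral hc_ne γ hγ (ℛ k h) a

theorem stmt_7
    (k : Type) [Field k] [IsAlgClosed k]
    (H : Type) [Ring H] [HopfAlgebra k H] [FiniteDimensional k H]
    -- `c` is a non-zero left integral for `H`
    (c : H) (hc_ne : c ≠ 0)
    (hc_left_integral : ∀ h : H, h * c = (Coalgebra.counit (R := k) h) • c)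
    -- `γ` is the modulus of `H`
    (γ : H →ₐ[k] k) (hγ : ∀ h : H, c * h = γ h • c)
    -- `lam` is a right cointegral:  (λ ⊗ id)(Δ h) = λ(h) • 1
    (lam : H →ₗ[k] k)
    (hlam : ∀ h : H,
      (TensorProduct.lid k H)
        ((LinearMap.rTensor H lam) (Coalgebra.comul (R := k) h)) = lam h • (1 : H)) :
    -- conclusion: γ⁻¹(h₍₂₎) · λ(S(h₍₁₎)·a·h₍₃₎) = ε(h) · λ(a) for all a, h
    ∀ a h : H,
      lam ((LinearMap.mul' k H)
        ((LinearMap.rTensor H ((LinearMap.mulRight k a).comp (HopfAlgebra.antipode (R := k))))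
          ((LinearMap.rTensor H
              ((TensorProduct.rid k H).toLinearMap.comp
                (LinearMap.lTensor H ((γ.toLinearMap).comp (HopfAlgebra.antipode (R := k))))))
            ((LinearMap.rTensor H (Coalgebra.comul (R := k))) (Coalgebra.comul (R := k) h)))))
      = (Coalgebra.counit (R := k) h) * lam a :=
  stmt_7_general k H c hc_ne hc_left_integral γ hγ lam hlam
end
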